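/- arXiv:1210.4370 — 6 statements merged into one kernel-verified Lean document; each statement's English description precedes it below -/
import Mathlib

section
/- Every path graph P_n (a tree whose removal of degree-one vertices leaves a path) of size e admits, for every set S of e positive integers, an α_S-labeling: an injective function f from its vertices to {0,1,...,max S} such that the multiset of edge differences {|f(x)-f(y)| : [x,y] an edge} equals S, and the maximum of f on one bipartition class is strictly less than the minimum of f on the other. -/
def Fsum (d : ℕ → ℕ) (k : ℕ) : ℤ := ∑ j ∈ Finset.range k, (-1:ℤ)^j * d j

lemma Fsum_zero (d : ℕ → ℕ) : Fsum d 0 = 0 := by simp [Fsum]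

lemma Fsum_step (d : ℕ → ℕ) (k : ℕ) : Fsum d (k+1) - Fsum d k = (-1:ℤ)^k * d k := by
  simp [Fsum, Finset.sum_range_succ]

lemma neg_one_sq' (k : ℕ) : (-1:ℤ)^k * (-1:ℤ)^k = 1 := by
  rcases Nat.even_or_odd k with h | h
  · rw [h.neg_one_pow]; ring
  · rw [h.neg_one_pow]; ring

lemma Fsum_key (n : ℕ) (d : ℕ → ℕ) (hpos : ∀ j, j < n → 0 < d j)
    (hanti : ∀ j, j + 1 < n → d (j+1) < d j) :
    ∀ p k m, m = k + p + 1 → m ≤ n →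
      0 < (-1:ℤ)^k * (Fsum d m - Fsum d k) ∧
      (-1:ℤ)^k * (Fsum d m - Fsum d k) ≤ d k := by
  intro p
  induction p with
  | zero =>
    intro k m hm hmn
    subst hm
    rw [Fsum_step]
    rw [← mul_assoc, neg_one_sq' k, one_mul]
    exact ⟨by exact_mod_cast hpos k (by omega), le_refl _⟩
  | succ p ih =>
    intro k m hm hmn
    obtain ⟨h1, h2⟩ := ih (k+1) m (by omega) hmn
    have hd : (d (k+1) : ℤ) < d k := by exact_mod_cast hanti k (by omega)
    have hs := Fsum_step d k
    have hsq := neg_one_sq' k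
    have e : (-1:ℤ)^k * (Fsum d m - Fsum d k)
        = d k - (-1:ℤ)^(k+1) * (Fsum d m - Fsum d (k+1)) := by
      have hp : (-1:ℤ)^(k+1) = -(-1:ℤ)^k := by ring
      rw [hp]
      linear_combination ((-1:ℤ)^k) * hs + (d k : ℤ) * hsq
    rw [e]
    constructor <;> linarith

/-- The set of absolute differences of labels along the edges of a graph. -/
def diffSet {V : Type*} (G : SimpleGraph V) (f : V → ℕ) : Set ℕ :=
  {n | ∃ u v, G.Adj u v ∧ ((f u : ℤ) - (f v : ℤ)).natAbs = n}

/-- every path graph on `n+1` vertices (size `e = n`) admits an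
`α_S`-labeling for every set `S` of `n` positive integers.  The bipartition
classes of the path are the even-indexed and the odd-indexed vertices. -/
theorem stmt_2 (n : ℕ) (hn : 0 < n) (S : Finset ℕ)
    (hcard : S.card = n) (hpos : ∀ s ∈ S, 0 < s) :
    ∃ f : Fin (n + 1) → ℕ,
      Function.Injective f ∧
      (∀ v, f v ≤ S.max' (Finset.card_pos.mp (by omega))) ∧
      diffSet (SimpleGraph.pathGraph (n + 1)) f = ↑S ∧
      ((∀ a b : Fin (n + 1), Even a.val → ¬ Even b.val → f a < f b) ∨
       (∀ a b : Fin (n + 1), ¬ Even a.val → Even b.val → f a < f b)) := by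
  set g : Fin n → ℕ := fun i => (S.orderIsoOfFin hcard i : ℕ) with hg
  have hgmono : StrictMono g := fun i j h =>
    (S.orderIsoOfFin hcard).strictMono h
  have hgS : ∀ i, g i ∈ S := fun i => (S.orderIsoOfFin hcard i).2
  have hgsurj : ∀ s ∈ S, ∃ i, g i = s := by
    intro s hs
    obtain ⟨i, hi⟩ := (S.orderIsoOfFin hcard).surjective ⟨s, hs⟩
    exact ⟨i, congrArg Subtype.val hi⟩
  set d : ℕ → ℕ := fun j => g ⟨n - 1 - j, by omega⟩ with hd
  have hdS : ∀ j, d j ∈ S := fun j => hgS _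
  have hdpos : ∀ j, j < n → 0 < d j := fun j _ => hpos _ (hdS j)
  have hdanti : ∀ j, j + 1 < n → d (j+1) < d j := by
    intro j hj
    exact hgmono (by simp [Fin.lt_def]; omega)
  have key : ∀ k m, k < m → m ≤ n →
      0 < (-1:ℤ)^k * (Fsum d m - Fsum d k) ∧
      (-1:ℤ)^k * (Fsum d m - Fsum d k) ≤ d k := by
    intro k m hkm hmn
    exact Fsum_key n d hdpos hdanti (m - k - 1) k m (by omega) hmn
  have hF0 : ∀ k, k ≤ n → 0 ≤ Fsum d k := by
    intro k hk
    rcases Nat.eq_zero_or_pos k with h | h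
    · simp [h, Fsum_zero]
    · have := (key 0 k h hk).1
      simp [Fsum_zero] at this
      linarith
  have hFle : ∀ k, k ≤ n → Fsum d k ≤ d 0 := by
    intro k hk
    rcases Nat.eq_zero_or_pos k with h | h
    · simp [h, Fsum_zero]
    · have := (key 0 k h hk).2
      simp [Fsum_zero] at this
      linarith
  refine ⟨fun v => (Fsum d v.val).toNat, ?_, ?_, ?_, ?_⟩
  · -- injective
    intro a b hab
    have ha : ((Fsum d a.val).toNat : ℤ) = Fsum d a.val :=
      Int.toNat_of_nonneg (hF0 _ (by omega))
    have hb : ((Fsum d b.val).toNat : ℤ) = Fsum d b.val :=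
      Int.toNat_of_nonneg (hF0 _ (by omega))
    have hFab : Fsum d a.val = Fsum d b.val := by
      have hab' : (Fsum d a.val).toNat = (Fsum d b.val).toNat := hab
      rw [← ha, ← hb]; exact_mod_cast hab'
    by_contra hne
    rcases lt_or_gt_of_ne (fun h : a.val = b.val => hne (Fin.ext h)) with h | h
    · have := (key a.val b.val h (by omega)).1
      rw [hFab] at this; simp at this
    · have := (key b.val a.val h (by omega)).1
      rw [hFab] at this; simp at this
  · -- bound
    intro v
    have h1 : Fsum d v.val ≤ d 0 := hFle _ (by omega)
    have h2 : (Fsum d v.val).toNat ≤ d 0 := by omega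
    exact h2.trans (Finset.le_max' S (d 0) (hdS 0))
  · -- diffSet
    ext s
    simp only [diffSet, Set.mem_setOf_eq, Finset.coe_sort_coe, Finset.mem_coe]
    constructor
    · rintro ⟨u, v, huv, hs⟩
      rw [SimpleGraph.pathGraph_adj] at huv
      have hval : ∀ (x y : Fin (n+1)), x.val + 1 = y.val →
          (((Fsum d x.val).toNat : ℤ) - ((Fsum d y.val).toNat : ℤ)).natAbs = d x.val := by
        intro x y hxy
        rw [Int.toNat_of_nonneg (hF0 _ (by omega)), Int.toNat_of_nonneg (hF0 _ (by omega))]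
        have : Fsum d y.val - Fsum d x.val = (-1:ℤ)^x.val * d x.val := by
          rw [← hxy]; exact Fsum_step d x.val
        have h2 : Fsum d x.val - Fsum d y.val = -((-1:ℤ)^x.val * d x.val) := by linarith
        rw [h2]
        rcases Nat.even_or_odd x.val with h | h
        · rw [h.neg_one_pow]; simp
        · rw [h.neg_one_pow]; simp
      rcases huv with h | h
      · rw [hval u v h] at hs; rw [← hs]; exact hdS _
      · rw [show ((Fsum d u.val).toNat : ℤ) - ((Fsum d v.val).toNat : ℤ)
              = -(((Fsum d v.val).toNat : ℤ) - ((Fsum d u.val).toNat : ℤ)) by ring,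
          Int.natAbs_neg, hval v u h] at hs
        rw [← hs]; exact hdS _
    · intro hs
      obtain ⟨i, hi⟩ := hgsurj s hs
      have hiv : i.val < n := i.2
      set j := n - 1 - i.val with hj
      have hdj : d j = s := by
        have he : (⟨n - 1 - j, by omega⟩ : Fin n) = i := by
          apply Fin.ext; simp only [hj]; omega
        show g ⟨n - 1 - j, by omega⟩ = s
        rw [he, hi]
      refine ⟨⟨j, by omega⟩, ⟨j + 1, by omega⟩, ?_, ?_⟩
      · rw [SimpleGraph.pathGraph_adj]; left; simp
      · simp only
        rw [Int.toNat_of_nonneg (hF0 _ (by omega)), Int.toNat_of_nonneg (hF0 _ (by omega))]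
        have hstep : Fsum d (j+1) - Fsum d j = (-1:ℤ)^j * d j := Fsum_step d j
        have h2 : Fsum d j - Fsum d (j+1) = -((-1:ℤ)^j * d j) := by linarith
        rw [h2, ← hdj]
        rcases Nat.even_or_odd j with h | h
        · rw [h.neg_one_pow]; simp
        · rw [h.neg_one_pow]; simp
  · -- parity
    left
    intro a b ha hb
    have hb' : Odd b.val := Nat.not_even_iff_odd.mp hb
    have hFa : ((Fsum d a.val).toNat : ℤ) = Fsum d a.val :=
      Int.toNat_of_nonneg (hF0 _ (by omega))
    have hFb : ((Fsum d b.val).toNat : ℤ) = Fsum d b.val :=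
      Int.toNat_of_nonneg (hF0 _ (by omega))
    have hlt : Fsum d a.val < Fsum d b.val := by
      rcases Nat.lt_trichotomy a.val b.val with h | h | h
      · have := (key a.val b.val h (by omega)).1
        rw [ha.neg_one_pow] at this; linarith
      · exfalso; rw [h] at ha; exact hb ha
      · have := (key b.val a.val h (by omega)).1
        rw [hb'.neg_one_pow] at this; linarith
    have : ((Fsum d a.val).toNat : ℤ) < ((Fsum d b.val).toNat : ℤ) := by
      rw [hFa, hFb]; exact hlt
    exact_mod_cast this
end

section
/- Every caterpillar of size e admits an α_S-labeling for every set S of e positive integers. -/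
/-- Vertex type of the caterpillar `C[n_1,m_1,…,n_t,m_t]`:
`x_i`'s, `y_i`'s, pendant vertices attached to the `x_i`'s, and pendant
vertices attached to the `y_i`'s. -/
abbrev CatV (t : ℕ) (n m : Fin t → ℕ) : Type :=
  (Fin t ⊕ Fin t) ⊕ ((Σ i : Fin t, Fin (n i)) ⊕ (Σ i : Fin t, Fin (m i)))

/-- Adjacency seed relation of the caterpillar: `x_i ~ y_i`, `y_i ~ x_{i+1}`,
`x_i ~` its pendant vertices, `y_i ~` its pendant vertices. -/
def catRel (t : ℕ) (n m : Fin t → ℕ) : CatV t n m → CatV t n m → Prop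
  | Sum.inl (Sum.inl i), Sum.inl (Sum.inr j) => i = j ∨ (i : ℕ) = (j : ℕ) + 1
  | Sum.inl (Sum.inl i), Sum.inr (Sum.inl ⟨j, _⟩) => i = j
  | Sum.inl (Sum.inr i), Sum.inr (Sum.inr ⟨j, _⟩) => i = j
  | _, _ => False

/-- The caterpillar `C[n_1,m_1,…,n_t,m_t]` as a simple graph. -/
def caterpillar (t : ℕ) (n m : Fin t → ℕ) : SimpleGraph (CatV t n m) :=
  SimpleGraph.fromRel (catRel t n m)

/-- The bipartition class `A`: the `x_i`'s together with the pendant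
neighbours of the `y_i`'s. -/
def catInA {t : ℕ} {n m : Fin t → ℕ} : CatV t n m → Prop
  | Sum.inl (Sum.inl _) => True
  | Sum.inl (Sum.inr _) => False
  | Sum.inr (Sum.inl _) => False
  | Sum.inr (Sum.inr _) => True

namespace Stmt3

variable (S : Finset ℕ)

noncomputable def d (k : ℕ) : ℕ :=
  if h : k < S.card then (S.orderIsoOfFin rfl ⟨S.card - 1 - k, by omega⟩ : ℕ) else 0

lemma d_mem {k : ℕ} (h : k < S.card) : d S k ∈ S := by
  rw [d, dif_pos h]; exact (S.orderIsoOfFin rfl _).2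

lemma d_lt {j k : ℕ} (hjk : j < k) (h : k < S.card) : d S k < d S j := by
  rw [d, dif_pos h, d, dif_pos (lt_trans hjk h)]
  have h2 : (S.orderIsoOfFin rfl ⟨S.card - 1 - k, by omega⟩) <
      (S.orderIsoOfFin rfl ⟨S.card - 1 - j, by omega⟩) := by
    apply (S.orderIsoOfFin rfl).strictMono
    simp only [Fin.mk_lt_mk]; omega
  exact_mod_cast h2

lemma d_le {j k : ℕ} (hjk : j ≤ k) (h : k < S.card) : d S k ≤ d S j := by
  rcases eq_or_lt_of_le hjk with rfl | hl
  · exact le_refl _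
  · exact (d_lt S hl h).le

lemma d_inj {j k : ℕ} (hj : j < S.card) (hk : k < S.card) (h : d S j = d S k) : j = k := by
  rcases lt_trichotomy j k with hl | rfl | hl
  · exact absurd h (d_lt S hl hk).ne'
  · rfl
  · exact absurd h (d_lt S hl hj).ne

lemma d_surj {x : ℕ} (hx : x ∈ S) : ∃ k, k < S.card ∧ d S k = x := by
  obtain ⟨a, ha⟩ := (S.orderIsoOfFin rfl).surjective ⟨x, hx⟩
  refine ⟨S.card - 1 - a.val, by have := a.isLt; omega, ?_⟩
  rw [d, dif_pos (by have := a.isLt; omega)]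
  have h2 : (⟨S.card - 1 - (S.card - 1 - a.val), by have := a.isLt; omega⟩ : Fin S.card) = a := by
    ext; have := a.isLt; simp; omega
  rw [h2, ha]

variable (t : ℕ) (n m : Fin t → ℕ)

def Nn (i : ℕ) : ℕ := if h : i < t then n ⟨i, h⟩ else 0
def Mm (i : ℕ) : ℕ := if h : i < t then m ⟨i, h⟩ else 0

def off (i : ℕ) : ℕ := ∑ r ∈ Finset.range i, (Nn t n r + Mm t m r + 2)

def eI (i : ℕ) : ℕ := off t n m i + Nn t n i
def gI (i : ℕ) : ℕ := eI t n m i + Mm t m i + 1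

lemma off_succ (i : ℕ) : off t n m (i + 1) = off t n m i + (Nn t n i + Mm t m i + 2) :=
  Finset.sum_range_succ _ _

lemma off_mono {i j : ℕ} (h : i ≤ j) : off t n m i ≤ off t n m j :=
  Finset.sum_le_sum_of_subset (Finset.range_subset_range.2 h)

lemma off_lt {i j : ℕ} (h : i < j) : off t n m i + 2 ≤ off t n m j := by
  have h1 := off_succ t n m i
  have h2 := off_mono t n m h
  have h3 := off_mono t n m (show i + 1 ≤ j from h)
  omega

lemma off_t : off t n m t = 2 * t + (∑ i, n i) + (∑ i, m i) := by
  have hn : ∑ i : Fin t, n i = ∑ r ∈ Finset.range t, Nn t n r := by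
    rw [← Fin.sum_univ_eq_sum_range]
    exact Finset.sum_congr rfl fun i _ => by simp [Nn]
  have hm : ∑ i : Fin t, m i = ∑ r ∈ Finset.range t, Mm t m r := by
    rw [← Fin.sum_univ_eq_sum_range]
    exact Finset.sum_congr rfl fun i _ => by simp [Mm]
  rw [off, hn, hm]
  rw [Finset.sum_add_distrib, Finset.sum_add_distrib, Finset.sum_const, Finset.card_range]
  simp only [smul_eq_mul]
  ring

section Main

variable {t n m} (hE : S.card + 1 = off t n m t)
include hE

lemma off_lt_card {i : ℕ} (hi : i < t) : off t n m i < S.card := by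
  have := off_lt t n m hi; omega

lemma eI_lt_card {i : ℕ} (hi : i < t) : eI t n m i < S.card := by
  have h1 := off_succ t n m i
  have h2 := off_mono t n m (show i + 1 ≤ t from hi)
  rw [eI]; omega

lemma gI_lt_card {i : ℕ} (hi : i + 1 < t) : gI t n m i < S.card := by
  have h1 := off_succ t n m i
  have h2 := off_lt t n m hi
  rw [gI, eI]; omega

omit hE in lemma gI_eq (i : ℕ) : gI t n m i + 1 = off t n m (i + 1) := by
  have h1 := off_succ t n m i
  rw [gI, eI]; omega

lemma pendY_idx_lt {i j : ℕ} (hi : i < t) (hj : j < Mm t m i) :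
    eI t n m i + 1 + j < S.card := by
  have h1 := off_succ t n m i
  have h2 := off_mono t n m (show i + 1 ≤ t from hi)
  rw [eI]; omega

end Main

noncomputable def fx (t : ℕ) (n m : Fin t → ℕ) (i : ℕ) : ℕ :=
  ∑ r ∈ Finset.range i, (d S (eI t n m r) - d S (gI t n m r))

noncomputable def fy (t : ℕ) (n m : Fin t → ℕ) (i : ℕ) : ℕ :=
  fx S t n m i + d S (eI t n m i)

lemma fx_succ (t : ℕ) (n m : Fin t → ℕ) (i : ℕ) :
    fx S t n m (i + 1) = fx S t n m i + (d S (eI t n m i) - d S (gI t n m i)) :=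
  Finset.sum_range_succ _ _

lemma fx_mono (t : ℕ) (n m : Fin t → ℕ) {i j : ℕ} (h : i ≤ j) :
    fx S t n m i ≤ fx S t n m j :=
  Finset.sum_le_sum_of_subset (Finset.range_subset_range.2 h)

lemma d_pos' (hpos : ∀ s ∈ S, 0 < s) {k : ℕ} (h : k < S.card) : 0 < d S k :=
  hpos _ (d_mem S h)

section Main2

variable {t : ℕ} {n m : Fin t → ℕ} (hE : S.card + 1 = off t n m t)
include hE

lemma d_gI_lt_eI {i : ℕ} (hi : i + 1 < t) :
    d S (gI t n m i) < d S (eI t n m i) :=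
  d_lt S (by rw [gI]; omega) (gI_lt_card S hE hi)

lemma fy_eq {i : ℕ} (hi : i + 1 < t) :
    fy S t n m i = fx S t n m (i + 1) + d S (gI t n m i) := by
  have h1 := fx_succ S t n m i
  have h2 := (d_gI_lt_eI S hE hi).le
  rw [fy]; omega

lemma fx_lt {i j : ℕ} (hij : i < j) (hj : j < t) :
    fx S t n m i < fx S t n m j := by
  have h1 := fx_succ S t n m i
  have h2 := fx_mono S t n m (show i + 1 ≤ j from hij)
  have h3 := d_gI_lt_eI S hE (show i + 1 < t by omega)
  omega

lemma fy_lt {i : ℕ} (hi : i + 1 < t) :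
    fy S t n m (i + 1) < fy S t n m i := by
  have h1 := fy_eq S hE hi
  have h2 : d S (eI t n m (i + 1)) < d S (gI t n m i) := by
    apply d_lt S _ (eI_lt_card S hE hi)
    have := gI_eq (t := t) (n := n) (m := m) i
    rw [eI]; omega
  rw [fy]; omega

lemma fy_anti {i j : ℕ} (hij : i ≤ j) (hj : j < t) :
    fy S t n m j ≤ fy S t n m i := by
  induction j with
  | zero => have : i = 0 := by omega
            subst this; exact le_refl _
  | succ k ih =>
    rcases Nat.eq_or_lt_of_le hij with rfl | hl
    · exact le_refl _
    · exact le_trans (fy_lt S hE hj).le (ih (by omega) (by omega))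

lemma fy_lt' {i j : ℕ} (hij : i < j) (hj : j < t) :
    fy S t n m j < fy S t n m i := by
  have h1 := fy_anti S hE (show i + 1 ≤ j from hij) hj
  have h2 := fy_lt S hE (show i + 1 < t by omega)
  omega



omit hE in
lemma Nn_eq {i : ℕ} (h : i < t) : Nn t n i = n ⟨i, h⟩ := dif_pos h
omit hE in
lemma Mm_eq {i : ℕ} (h : i < t) : Mm t m i = m ⟨i, h⟩ := dif_pos h

lemma Lub {i : ℕ} (hi : i < t) :
    fx S t n m i + d S (off t n m i) ≤ d S 0 := by
  induction i with
  | zero => simp [fx, off]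
  | succ k ih =>
    have h1 := fy_eq S hE hi
    have hg := gI_eq (t := t) (n := n) (m := m) k
    have h2 : d S (off t n m (k + 1)) ≤ d S (gI t n m k) :=
      d_le S (by omega) (off_lt_card S hE hi)
    have h3 : d S (eI t n m k) ≤ d S (off t n m k) :=
      d_le S (by rw [eI]; omega) (eI_lt_card S hE (by omega))
    have h4 := ih (by omega)
    rw [fy] at h1
    omega

lemma fy_le_d0 {i : ℕ} (hi : i < t) : fy S t n m i ≤ d S 0 := by
  have h1 := Lub S hE hi
  have h2 : d S (eI t n m i) ≤ d S (off t n m i) :=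
    d_le S (by rw [eI]; omega) (eI_lt_card S hE hi)
  rw [fy]; omega

lemma pendx_le_d0 {i j : ℕ} (hi : i < t) (hj : j < Nn t n i) :
    fx S t n m i + d S (off t n m i + j) ≤ d S 0 := by
  have h1 := Lub S hE hi
  have h2 : d S (off t n m i + j) ≤ d S (off t n m i) := by
    apply d_le S (by omega)
    have := eI_lt_card S hE hi
    rw [eI] at this; omega
  omega

-- A-side facts
lemma fx_lt_V (ht : 0 < t) (hpos : ∀ s ∈ S, 0 < s) {i : ℕ} (hi : i < t) :
    fx S t n m i < fy S t n m (t - 1) := by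
  have h1 := fx_mono S t n m (show i ≤ t - 1 by omega)
  have h2 : 0 < d S (eI t n m (t - 1)) :=
    d_pos' S hpos (eI_lt_card S hE (by omega))
  rw [fy]; omega

lemma pendy_gt_fx (hpos : ∀ s ∈ S, 0 < s) {i j : ℕ} (hi : i < t) (hj : j < Mm t m i) :
    fx S t n m i < fy S t n m i - d S (eI t n m i + 1 + j) := by
  have h1 : d S (eI t n m i + 1 + j) < d S (eI t n m i) :=
    d_lt S (by omega) (pendY_idx_lt S hE hi hj)
  have h2 : fy S t n m i = fx S t n m i + d S (eI t n m i) := rfl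
  omega

lemma pendy_lt_fx_succ {i j : ℕ} (hi : i + 1 < t) (hj : j < Mm t m i) :
    fy S t n m i - d S (eI t n m i + 1 + j) < fx S t n m (i + 1) := by
  have h1 := fy_eq S hE hi
  have h2 : d S (gI t n m i) < d S (eI t n m i + 1 + j) :=
    d_lt S (by rw [gI]; omega) (gI_lt_card S hE hi)
  have h4 := fx_succ S t n m i
  have h5 := d_gI_lt_eI S hE hi
  have h6 : fy S t n m i = fx S t n m i + d S (eI t n m i) := rfl
  omega

lemma pendy_lt_V (ht : 0 < t) (hpos : ∀ s ∈ S, 0 < s) {i j : ℕ} (hi : i < t)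
    (hj : j < Mm t m i) :
    fy S t n m i - d S (eI t n m i + 1 + j) < fy S t n m (t - 1) := by
  rcases Nat.lt_or_ge (i + 1) t with h | h
  · have h1 := pendy_lt_fx_succ S hE h hj
    have h2 := fx_mono S t n m (show i + 1 ≤ t - 1 by omega)
    have h3 := fx_lt_V S hE ht hpos (show t - 1 < t by omega)
    omega
  · have hit : i = t - 1 := by omega
    subst hit
    have h1 : 0 < d S (eI t n m (t - 1) + 1 + j) :=
      d_pos' S hpos (pendY_idx_lt S hE hi hj)
    have h2 : 0 < d S (eI t n m (t - 1)) :=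
      d_pos' S hpos (eI_lt_card S hE hi)
    have h3 : fy S t n m (t - 1) = fx S t n m (t - 1) + d S (eI t n m (t - 1)) := rfl
    omega

-- B-side facts
lemma pendx_gt_fy {i j : ℕ} (hi : i < t) (hj : j < Nn t n i) :
    fy S t n m i < fx S t n m i + d S (off t n m i + j) := by
  have h1 : d S (eI t n m i) < d S (off t n m i + j) :=
    d_lt S (by rw [eI]; omega) (eI_lt_card S hE hi)
  have h2 : fy S t n m i = fx S t n m i + d S (eI t n m i) := rfl
  omega

lemma pendx_lt_fy_pred {i j : ℕ} (hi : i < t) (h0 : 0 < i) (hj : j < Nn t n i) :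
    fx S t n m i + d S (off t n m i + j) < fy S t n m (i - 1) := by
  have he : i - 1 + 1 = i := by omega
  have h1 := fy_eq S hE (show i - 1 + 1 < t by omega)
  rw [he] at h1
  have hg := gI_eq (t := t) (n := n) (m := m) (i - 1)
  rw [he] at hg
  have h2 : d S (off t n m i + j) < d S (gI t n m (i - 1)) := by
    apply d_lt S (by omega)
    have := eI_lt_card S hE hi
    rw [eI] at this; omega
  omega

omit hE in
lemma exists_block (l : ℕ) : ∀ k, k < off t n m l →
    ∃ i, i < l ∧ off t n m i ≤ k ∧ k < off t n m (i + 1) := by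
  induction l with
  | zero => intro k hk; simp [off] at hk
  | succ l ih =>
    intro k hk
    rcases Nat.lt_or_ge k (off t n m l) with h | h
    · obtain ⟨i, h1, h2, h3⟩ := ih k h
      exact ⟨i, by omega, h2, h3⟩
    · exact ⟨l, by omega, h, hk⟩

end Main2

noncomputable def lbl (t : ℕ) (n m : Fin t → ℕ) : CatV t n m → ℕ
  | Sum.inl (Sum.inl i) => fx S t n m i.val
  | Sum.inl (Sum.inr i) => fy S t n m i.val
  | Sum.inr (Sum.inl ⟨i, j⟩) => fx S t n m i.val + d S (off t n m i.val + j.val)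
  | Sum.inr (Sum.inr ⟨i, j⟩) => fy S t n m i.val - d S (eI t n m i.val + 1 + j.val)

end Stmt3

open Stmt3 in
/-- every caterpillar of size `e` admits an `α_S`-labeling for
every set `S` of `e` positive integers. -/
theorem stmt_3 (t : ℕ) (ht : 0 < t) (n m : Fin t → ℕ) (S : Finset ℕ)
    (hcard : S.card = 2 * t - 1 + (∑ i, n i) + (∑ i, m i))
    (hpos : ∀ s ∈ S, 0 < s) :
    ∃ f : CatV t n m → ℕ,
      Function.Injective f ∧
      (∀ v, f v ≤ S.max' (Finset.card_pos.mp (by omega))) ∧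
      diffSet (caterpillar t n m) f = ↑S ∧
      ((∀ a b : CatV t n m, catInA a → ¬ catInA b → f a < f b) ∨
       (∀ a b : CatV t n m, ¬ catInA a → catInA b → f a < f b)) := by
  have hE : S.card + 1 = off t n m t := by rw [off_t]; omega
  refine ⟨lbl S t n m, ?_, ?_, ?_, ?_⟩
  · -- injectivity
    intro u v huv
    rcases u with ((i | i) | (⟨i, j⟩ | ⟨i, j⟩)) <;>
      rcases v with ((i' | i') | (⟨i', j'⟩ | ⟨i', j'⟩)) <;>
      simp only [lbl] at huv
    · -- x x
      rcases Nat.lt_trichotomy i.val i'.val with h | h | h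
      · exact absurd huv (fx_lt S hE h i'.isLt).ne
      · rw [show i = i' from Fin.ext h]
      · exact absurd huv (fx_lt S hE h i.isLt).ne'
    · -- x y
      have h1 := fx_lt_V S hE ht hpos i.isLt
      have h2 := fy_anti S hE (show i'.val ≤ t - 1 by have := i'.isLt; omega)
        (show t - 1 < t by omega)
      exact absurd huv (by omega)
    · -- x pendx
      have hj' : (j' : ℕ) < Nn t n i'.val := by simpa [Nn_eq i'.isLt] using j'.isLt
      have h1 := pendx_gt_fy S hE i'.isLt hj'
      have h2 := fy_anti S hE (show i'.val ≤ t - 1 by have := i'.isLt; omega)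
        (show t - 1 < t by omega)
      have h3 := fx_lt_V S hE ht hpos i.isLt
      exact absurd huv (by omega)
    · -- x pendy
      have hj' : (j' : ℕ) < Mm t m i'.val := by simpa [Mm_eq i'.isLt] using j'.isLt
      rcases Nat.lt_or_ge i.val (i'.val + 1) with h | h
      · have h1 := fx_mono S t n m (show i.val ≤ i'.val by omega)
        have h2 := pendy_gt_fx S hE hpos i'.isLt hj'
        exact absurd huv (by omega)
      · have h1 := pendy_lt_fx_succ S hE (show i'.val + 1 < t by have := i.isLt; omega) hj'
        have h2 := fx_mono S t n m (show i'.val + 1 ≤ i.val from h)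
        exact absurd huv (by omega)
    · -- y x
      have h1 := fx_lt_V S hE ht hpos i'.isLt
      have h2 := fy_anti S hE (show i.val ≤ t - 1 by have := i.isLt; omega)
        (show t - 1 < t by omega)
      exact absurd huv (by omega)
    · -- y y
      rcases Nat.lt_trichotomy i.val i'.val with h | h | h
      · exact absurd huv (fy_lt' S hE h i'.isLt).ne'
      · rw [show i = i' from Fin.ext h]
      · exact absurd huv (fy_lt' S hE h i.isLt).ne
    · -- y pendx
      have hj' : (j' : ℕ) < Nn t n i'.val := by simpa [Nn_eq i'.isLt] using j'.isLt
      rcases Nat.lt_or_ge i.val i'.val with h | h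
      · have h1 := pendx_lt_fy_pred S hE i'.isLt (by omega) hj'
        have h2 := fy_anti S hE (show i.val ≤ i'.val - 1 by omega)
          (show i'.val - 1 < t by have := i'.isLt; omega)
        exact absurd huv (by omega)
      · have h1 := pendx_gt_fy S hE i'.isLt hj'
        have h2 := fy_anti S hE h i.isLt
        exact absurd huv (by omega)
    · -- y pendy
      have hj' : (j' : ℕ) < Mm t m i'.val := by simpa [Mm_eq i'.isLt] using j'.isLt
      have h1 := pendy_lt_V S hE ht hpos i'.isLt hj'
      have h2 := fy_anti S hE (show i.val ≤ t - 1 by have := i.isLt; omega)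
        (show t - 1 < t by omega)
      exact absurd huv (by omega)
    · -- pendx x
      have hj : (j : ℕ) < Nn t n i.val := by simpa [Nn_eq i.isLt] using j.isLt
      have h1 := pendx_gt_fy S hE i.isLt hj
      have h2 := fy_anti S hE (show i.val ≤ t - 1 by have := i.isLt; omega)
        (show t - 1 < t by omega)
      have h3 := fx_lt_V S hE ht hpos i'.isLt
      exact absurd huv (by omega)
    · -- pendx y
      have hj : (j : ℕ) < Nn t n i.val := by simpa [Nn_eq i.isLt] using j.isLt
      rcases Nat.lt_or_ge i'.val i.val with h | h
      · have h1 := pendx_lt_fy_pred S hE i.isLt (by omega) hj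
        have h2 := fy_anti S hE (show i'.val ≤ i.val - 1 by omega)
          (show i.val - 1 < t by have := i.isLt; omega)
        exact absurd huv (by omega)
      · have h1 := pendx_gt_fy S hE i.isLt hj
        have h2 := fy_anti S hE h i'.isLt
        exact absurd huv (by omega)
    · -- pendx pendx
      have hj : (j : ℕ) < Nn t n i.val := by simpa [Nn_eq i.isLt] using j.isLt
      have hj' : (j' : ℕ) < Nn t n i'.val := by simpa [Nn_eq i'.isLt] using j'.isLt
      rcases Nat.lt_trichotomy i.val i'.val with h | h | h
      · have h1 := pendx_gt_fy S hE i.isLt hj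
        have h2 := fy_anti S hE (show i.val ≤ i'.val - 1 by omega)
          (show i'.val - 1 < t by have := i'.isLt; omega)
        have h3 := pendx_lt_fy_pred S hE i'.isLt (by omega) hj'
        exact absurd huv (by omega)
      · obtain rfl : i = i' := Fin.ext h
        have hlt : off t n m i.val + j.val < S.card := by
          have := eI_lt_card S hE i.isLt
          rw [eI] at this; omega
        have hlt' : off t n m i.val + j'.val < S.card := by
          have := eI_lt_card S hE i.isLt
          rw [eI] at this; omega
        have hd : d S (off t n m i.val + j.val) = d S (off t n m i.val + j'.val) := by omega
        have hij := d_inj S hlt hlt' hd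
        rw [show j = j' from Fin.ext (by omega)]
      · have h1 := pendx_gt_fy S hE i'.isLt hj'
        have h2 := fy_anti S hE (show i'.val ≤ i.val - 1 by omega)
          (show i.val - 1 < t by have := i.isLt; omega)
        have h3 := pendx_lt_fy_pred S hE i.isLt (by omega) hj
        exact absurd huv (by omega)
    · -- pendx pendy
      have hj : (j : ℕ) < Nn t n i.val := by simpa [Nn_eq i.isLt] using j.isLt
      have hj' : (j' : ℕ) < Mm t m i'.val := by simpa [Mm_eq i'.isLt] using j'.isLt
      have h1 := pendx_gt_fy S hE i.isLt hj
      have h2 := fy_anti S hE (show i.val ≤ t - 1 by have := i.isLt; omega)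
        (show t - 1 < t by omega)
      have h3 := pendy_lt_V S hE ht hpos i'.isLt hj'
      exact absurd huv (by omega)
    · -- pendy x
      have hj : (j : ℕ) < Mm t m i.val := by simpa [Mm_eq i.isLt] using j.isLt
      rcases Nat.lt_or_ge i'.val (i.val + 1) with h | h
      · have h1 := fx_mono S t n m (show i'.val ≤ i.val by omega)
        have h2 := pendy_gt_fx S hE hpos i.isLt hj
        exact absurd huv (by omega)
      · have h1 := pendy_lt_fx_succ S hE (show i.val + 1 < t by have := i'.isLt; omega) hj
        have h2 := fx_mono S t n m (show i.val + 1 ≤ i'.val from h)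
        exact absurd huv (by omega)
    · -- pendy y
      have hj : (j : ℕ) < Mm t m i.val := by simpa [Mm_eq i.isLt] using j.isLt
      have h1 := pendy_lt_V S hE ht hpos i.isLt hj
      have h2 := fy_anti S hE (show i'.val ≤ t - 1 by have := i'.isLt; omega)
        (show t - 1 < t by omega)
      exact absurd huv (by omega)
    · -- pendy pendx
      have hj : (j : ℕ) < Mm t m i.val := by simpa [Mm_eq i.isLt] using j.isLt
      have hj' : (j' : ℕ) < Nn t n i'.val := by simpa [Nn_eq i'.isLt] using j'.isLt
      have h1 := pendx_gt_fy S hE i'.isLt hj'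
      have h2 := fy_anti S hE (show i'.val ≤ t - 1 by have := i'.isLt; omega)
        (show t - 1 < t by omega)
      have h3 := pendy_lt_V S hE ht hpos i.isLt hj
      exact absurd huv (by omega)
    · -- pendy pendy
      have hj : (j : ℕ) < Mm t m i.val := by simpa [Mm_eq i.isLt] using j.isLt
      have hj' : (j' : ℕ) < Mm t m i'.val := by simpa [Mm_eq i'.isLt] using j'.isLt
      rcases Nat.lt_trichotomy i.val i'.val with h | h | h
      · have h1 := pendy_lt_fx_succ S hE (show i.val + 1 < t by have := i'.isLt; omega) hj
        have h2 := fx_mono S t n m (show i.val + 1 ≤ i'.val from h)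
        have h3 := pendy_gt_fx S hE hpos i'.isLt hj'
        exact absurd huv (by omega)
      · obtain rfl : i = i' := Fin.ext h
        have ha : eI t n m i.val + 1 + j.val < S.card := pendY_idx_lt S hE i.isLt hj
        have hb : eI t n m i.val + 1 + j'.val < S.card := pendY_idx_lt S hE i.isLt hj'
        have hda : d S (eI t n m i.val + 1 + j.val) < d S (eI t n m i.val) :=
          d_lt S (by omega) ha
        have hdb : d S (eI t n m i.val + 1 + j'.val) < d S (eI t n m i.val) :=
          d_lt S (by omega) hb
        have hfy : fy S t n m i.val = fx S t n m i.val + d S (eI t n m i.val) := rfl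
        have hd : d S (eI t n m i.val + 1 + j.val) = d S (eI t n m i.val + 1 + j'.val) := by
          omega
        have hij := d_inj S ha hb hd
        rw [show j = j' from Fin.ext (by omega)]
      · have h1 := pendy_lt_fx_succ S hE (show i'.val + 1 < t by have := i.isLt; omega) hj'
        have h2 := fx_mono S t n m (show i'.val + 1 ≤ i.val from h)
        have h3 := pendy_gt_fx S hE hpos i.isLt hj
        exact absurd huv (by omega)
  · -- bound
    intro v
    have hmax : d S 0 ≤ S.max' (Finset.card_pos.mp (by omega)) :=
      S.le_max' _ (d_mem S (by omega))
    rcases v with ((i | i) | (⟨i, j⟩ | ⟨i, j⟩)) <;> simp only [lbl]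
    · have h1 := fy_le_d0 S hE i.isLt
      have h2 : fy S t n m i.val = fx S t n m i.val + d S (eI t n m i.val) := rfl
      omega
    · have h1 := fy_le_d0 S hE i.isLt
      omega
    · have hj : (j : ℕ) < Nn t n i.val := by simpa [Nn_eq i.isLt] using j.isLt
      have h1 := pendx_le_d0 S hE i.isLt hj
      omega
    · have h1 := fy_le_d0 S hE i.isLt
      omega
  · -- diff set
    ext x
    simp only [diffSet, Set.mem_setOf_eq, Finset.mem_coe]
    constructor
    · rintro ⟨u, v, hadj, hd⟩
      rw [caterpillar, SimpleGraph.fromRel_adj] at hadj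
      obtain ⟨-, hrel⟩ := hadj
      rcases u with ((i | i) | (⟨i, j⟩ | ⟨i, j⟩)) <;>
        rcases v with ((i' | i') | (⟨i', j'⟩ | ⟨i', j'⟩)) <;>
        simp only [catRel, or_false, false_or, or_self] at hrel <;>
        simp only [lbl] at hd
      · -- x y
        rcases hrel with rfl | h
        · have h2 : fy S t n m i.val = fx S t n m i.val + d S (eI t n m i.val) := rfl
          have h3 : x = d S (eI t n m i.val) := by omega
          exact h3 ▸ d_mem S (eI_lt_card S hE i.isLt)
        · have h1 := fx_succ S t n m i'.val
          have h4 : fx S t n m i.val = fx S t n m (i'.val + 1) := by rw [h]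
          have h5 := d_gI_lt_eI S hE (show i'.val + 1 < t by have := i.isLt; omega)
          have h2 : fy S t n m i'.val = fx S t n m i'.val + d S (eI t n m i'.val) := rfl
          have h3 : x = d S (gI t n m i'.val) := by omega
          exact h3 ▸ d_mem S (gI_lt_card S hE (by have := i.isLt; omega))
      · -- x pendx
        obtain rfl := hrel
        have hj' : (j' : ℕ) < Nn t n i.val := by simpa [Nn_eq i.isLt] using j'.isLt
        have hlt : off t n m i.val + j'.val < S.card := by
          have := eI_lt_card S hE i.isLt
          rw [eI] at this; omega
        have h3 : x = d S (off t n m i.val + j'.val) := by omega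
        exact h3 ▸ d_mem S hlt
      · -- y x
        rcases hrel with rfl | h
        · have h2 : fy S t n m i'.val = fx S t n m i'.val + d S (eI t n m i'.val) := rfl
          have h3 : x = d S (eI t n m i'.val) := by omega
          exact h3 ▸ d_mem S (eI_lt_card S hE i'.isLt)
        · have h1 := fx_succ S t n m i.val
          have h4 : fx S t n m i'.val = fx S t n m (i.val + 1) := by rw [h]
          have h5 := d_gI_lt_eI S hE (show i.val + 1 < t by have := i'.isLt; omega)
          have h2 : fy S t n m i.val = fx S t n m i.val + d S (eI t n m i.val) := rfl
          have h3 : x = d S (gI t n m i.val) := by omega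
          exact h3 ▸ d_mem S (gI_lt_card S hE (by have := i'.isLt; omega))
      · -- y pendy
        obtain rfl := hrel
        have hj' : (j' : ℕ) < Mm t m i.val := by simpa [Mm_eq i.isLt] using j'.isLt
        have ha : eI t n m i.val + 1 + j'.val < S.card := pendY_idx_lt S hE i.isLt hj'
        have hda : d S (eI t n m i.val + 1 + j'.val) < d S (eI t n m i.val) :=
          d_lt S (by omega) ha
        have h2 : fy S t n m i.val = fx S t n m i.val + d S (eI t n m i.val) := rfl
        have h3 : x = d S (eI t n m i.val + 1 + j'.val) := by omega
        exact h3 ▸ d_mem S ha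
      · -- pendx x
        obtain rfl := hrel
        have hj : (j : ℕ) < Nn t n i'.val := by simpa [Nn_eq i'.isLt] using j.isLt
        have hlt : off t n m i'.val + j.val < S.card := by
          have := eI_lt_card S hE i'.isLt
          rw [eI] at this; omega
        have h3 : x = d S (off t n m i'.val + j.val) := by omega
        exact h3 ▸ d_mem S hlt
      · -- pendy y
        obtain rfl := hrel
        have hj : (j : ℕ) < Mm t m i'.val := by simpa [Mm_eq i'.isLt] using j.isLt
        have ha : eI t n m i'.val + 1 + j.val < S.card := pendY_idx_lt S hE i'.isLt hj
        have hda : d S (eI t n m i'.val + 1 + j.val) < d S (eI t n m i'.val) :=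
          d_lt S (by omega) ha
        have h2 : fy S t n m i'.val = fx S t n m i'.val + d S (eI t n m i'.val) := rfl
        have h3 : x = d S (eI t n m i'.val + 1 + j.val) := by omega
        exact h3 ▸ d_mem S ha
    · intro hx
      obtain ⟨k, hk, hdk⟩ := d_surj S hx
      obtain ⟨i, hil, hk1, hk2⟩ := exists_block (t := t) (n := n) (m := m) t k (by omega)
      have hoff := off_succ t n m i
      rcases Nat.lt_or_ge k (off t n m i + Nn t n i) with hc | hc
      · -- pendant of x i
        refine ⟨Sum.inl (Sum.inl ⟨i, hil⟩),
          Sum.inr (Sum.inl ⟨⟨i, hil⟩, ⟨k - off t n m i, by have h9 : Nn t n i = n ⟨i, hil⟩ := dif_pos hil; omega⟩⟩),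
          ?_, ?_⟩
        · rw [caterpillar, SimpleGraph.fromRel_adj]
          exact ⟨by simp, Or.inl rfl⟩
        · simp only [lbl, Fin.val_mk]
          have h1 : off t n m i + (k - off t n m i) = k := by omega
          rw [h1, hdk]
          omega
      · rcases Nat.lt_or_ge (off t n m i + Nn t n i) k with hc2 | hc2
        · rcases Nat.lt_or_ge (off t n m i + Nn t n i + Mm t m i) k with hc3 | hc3
          · -- spine y i - x (i+1), k = gI i
            have hi1 : i + 1 < t := by
              by_contra hcon
              have h6 := off_mono t n m (show t ≤ i + 1 by omega)
              omega
            refine ⟨Sum.inl (Sum.inl ⟨i + 1, hi1⟩), Sum.inl (Sum.inr ⟨i, hil⟩),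
              ?_, ?_⟩
            · rw [caterpillar, SimpleGraph.fromRel_adj]
              exact ⟨by simp, Or.inl (Or.inr rfl)⟩
            · simp only [lbl, Fin.val_mk]
              have h1 := fx_succ S t n m i
              have h5 := d_gI_lt_eI S hE hi1
              have h2 : fy S t n m i = fx S t n m i + d S (eI t n m i) := rfl
              have hgik : gI t n m i = k := by rw [gI, eI]; omega
              rw [hgik] at h1 h5
              rw [hdk] at h1 h5
              omega
          · -- pendant of y i
            refine ⟨Sum.inl (Sum.inr ⟨i, hil⟩),
              Sum.inr (Sum.inr ⟨⟨i, hil⟩,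
                ⟨k - off t n m i - Nn t n i - 1, by have h9 : Mm t m i = m ⟨i, hil⟩ := dif_pos hil; omega⟩⟩),
              ?_, ?_⟩
            · rw [caterpillar, SimpleGraph.fromRel_adj]
              exact ⟨by simp, Or.inl rfl⟩
            · simp only [lbl, Fin.val_mk]
              have h1 : eI t n m i + 1 + (k - off t n m i - Nn t n i - 1) = k := by
                rw [eI]; omega
              rw [h1, hdk]
              have hda : d S k < d S (eI t n m i) :=
                d_lt S (by rw [eI]; omega) hk
              have h2 : fy S t n m i = fx S t n m i + d S (eI t n m i) := rfl
              rw [hdk] at hda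
              omega
        · -- spine x i - y i, k = eI i
          refine ⟨Sum.inl (Sum.inl ⟨i, hil⟩), Sum.inl (Sum.inr ⟨i, hil⟩), ?_, ?_⟩
          · rw [caterpillar, SimpleGraph.fromRel_adj]
            exact ⟨by simp, Or.inl (Or.inl rfl)⟩
          · simp only [lbl, Fin.val_mk]
            have h2 : fy S t n m i = fx S t n m i + d S (eI t n m i) := rfl
            have h1 : eI t n m i = k := by rw [eI]; omega
            rw [h1, hdk] at h2
            omega
  · -- separation
    left
    intro a b ha hb
    rcases a with ((i | i) | (⟨i, j⟩ | ⟨i, j⟩)) <;>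
      rcases b with ((i' | i') | (⟨i', j'⟩ | ⟨i', j'⟩)) <;>
      simp only [catInA, not_true, not_false_iff] at ha hb <;>
      simp only [lbl]
    · -- x y
      have h1 := fx_lt_V S hE ht hpos i.isLt
      have h2 := fy_anti S hE (show i'.val ≤ t - 1 by have := i'.isLt; omega)
        (show t - 1 < t by omega)
      omega
    · -- x pendx
      have hj' : (j' : ℕ) < Nn t n i'.val := by simpa [Nn_eq i'.isLt] using j'.isLt
      have h1 := fx_lt_V S hE ht hpos i.isLt
      have h2 := fy_anti S hE (show i'.val ≤ t - 1 by have := i'.isLt; omega)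
        (show t - 1 < t by omega)
      have h3 := pendx_gt_fy S hE i'.isLt hj'
      omega
    · -- pendy y
      have hj : (j : ℕ) < Mm t m i.val := by simpa [Mm_eq i.isLt] using j.isLt
      have h1 := pendy_lt_V S hE ht hpos i.isLt hj
      have h2 := fy_anti S hE (show i'.val ≤ t - 1 by have := i'.isLt; omega)
        (show t - 1 < t by omega)
      omega
    · -- pendy pendx
      have hj : (j : ℕ) < Mm t m i.val := by simpa [Mm_eq i.isLt] using j.isLt
      have hj' : (j' : ℕ) < Nn t n i'.val := by simpa [Nn_eq i'.isLt] using j'.isLt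
      have h1 := pendy_lt_V S hE ht hpos i.isLt hj
      have h2 := fy_anti S hE (show i'.val ≤ t - 1 by have := i'.isLt; omega)
        (show t - 1 < t by omega)
      have h3 := pendx_gt_fy S hE i'.isLt hj'
      omega
end

section
/- Every caterpillar with e edges admits a d-divisible α-labeling for every divisor d of e. -/
namespace Stmt4

def Sn (N : ℕ → ℕ) (i : ℕ) : ℕ := ∑ j ∈ Finset.range i, N j
def P (N Mm : ℕ → ℕ) (i : ℕ) : ℕ := Sn N i + Sn Mm i + 2 * i
def blk (e Mv x : ℕ) : ℕ := (e - x - 1) / Mv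
def SA (N Mm : ℕ → ℕ) (e Mv : ℕ) : ℕ → ℕ
  | 0 => 0
  | i+1 => SA N Mm e Mv i +
      (blk e Mv (P N Mm i + N i) - blk e Mv (P N Mm i + N i + Mm i + 1))
def fa (N Mm : ℕ → ℕ) (e Mv i : ℕ) : ℕ := i + Sn Mm i + SA N Mm e Mv i
def flb (N Mm : ℕ → ℕ) (e Mv i k : ℕ) : ℕ :=
  fa N Mm e Mv i + 1 + k +
    (blk e Mv (P N Mm i + N i) - blk e Mv (P N Mm i + N i + 1 + k))
def fb (N Mm : ℕ → ℕ) (e Mv i : ℕ) : ℕ :=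
  (e - (Sn N (i+1) + i)) + SA N Mm e Mv i + blk e Mv (P N Mm i + N i)
def fla (N Mm : ℕ → ℕ) (e Mv i k : ℕ) : ℕ :=
  (e - (Sn N i + i + k)) + SA N Mm e Mv i + blk e Mv (P N Mm i + k)

lemma Sn_succ (N : ℕ → ℕ) (i : ℕ) : Sn N (i+1) = Sn N i + N i :=
  Finset.sum_range_succ N i
lemma SA_zero (N Mm : ℕ → ℕ) (e Mv : ℕ) : SA N Mm e Mv 0 = 0 := rfl
lemma SA_succ (N Mm : ℕ → ℕ) (e Mv i : ℕ) :
    SA N Mm e Mv (i+1) = SA N Mm e Mv i +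
      (blk e Mv (P N Mm i + N i) - blk e Mv (P N Mm i + N i + Mm i + 1)) := rfl
lemma P_succ (N Mm : ℕ → ℕ) (i : ℕ) :
    P N Mm (i+1) = P N Mm i + N i + Mm i + 2 := by
  simp [P, Sn_succ]; ring
lemma P_mono (N Mm : ℕ → ℕ) : Monotone (P N Mm) := by
  apply monotone_nat_of_le_succ
  intro i; rw [P_succ]; omega
lemma blk_anti (e Mv : ℕ) {x y : ℕ} (h : x ≤ y) : blk e Mv y ≤ blk e Mv x :=
  Nat.div_le_div_right (by omega)
lemma P_bound {N Mm : ℕ → ℕ} {t e : ℕ} (he : e + 1 = P N Mm t) {i : ℕ}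
    (hi : i < t) : P N Mm i + N i + Mm i + 1 ≤ e := by
  have := P_mono N Mm (show i + 1 ≤ t from hi)
  rw [P_succ] at this; omega


/-- the `A`-side enumeration -/
def gA (N Mm : ℕ → ℕ) (e Mv i k : ℕ) : ℕ :=
  if k = 0 then fa N Mm e Mv i else flb N Mm e Mv i (k-1)
/-- the `B`-side enumeration -/
def gB (N Mm : ℕ → ℕ) (e Mv i k : ℕ) : ℕ :=
  if k < N i then fla N Mm e Mv i k else fb N Mm e Mv i

section
variable {N Mm : ℕ → ℕ} {t e Mv : ℕ}

lemma gA_zero' {e Mv i : ℕ} : gA N Mm e Mv i 0 = fa N Mm e Mv i := if_pos rfl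
lemma gA_pos' {e Mv i k : ℕ} (hk : k ≠ 0) :
    gA N Mm e Mv i k = flb N Mm e Mv i (k-1) := if_neg hk
lemma gB_lt' {e Mv i k : ℕ} (hk : k < N i) :
    gB N Mm e Mv i k = fla N Mm e Mv i k := if_pos hk
lemma gB_ge' {e Mv i k : ℕ} (hk : ¬ k < N i) :
    gB N Mm e Mv i k = fb N Mm e Mv i := if_neg hk

/-- edge `a_i -- ℓa_{i,k}` -/
lemma dla (he : e + 1 = P N Mm t) {i k : ℕ} (hi : i < t) (hk : k < N i) :
    fa N Mm e Mv i ≤ fla N Mm e Mv i k ∧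
    fla N Mm e Mv i k - fa N Mm e Mv i
      = (e - (P N Mm i + k)) + blk e Mv (P N Mm i + k) := by
  have hb := P_bound he hi
  simp only [fa, fla, P] at *
  omega

/-- edge `a_i -- b_i` -/
lemma dab (he : e + 1 = P N Mm t) {i : ℕ} (hi : i < t) :
    fa N Mm e Mv i ≤ fb N Mm e Mv i ∧
    fb N Mm e Mv i - fa N Mm e Mv i
      = (e - (P N Mm i + N i)) + blk e Mv (P N Mm i + N i) := by
  have hb := P_bound he hi
  simp only [fa, fb, P, Sn_succ] at *
  omega

/-- edge `b_i -- ℓb_{i,k}` -/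
lemma dlb (he : e + 1 = P N Mm t) {i k : ℕ} (hi : i < t) (hk : k < Mm i) :
    flb N Mm e Mv i k ≤ fb N Mm e Mv i ∧
    fb N Mm e Mv i - flb N Mm e Mv i k
      = (e - (P N Mm i + N i + 1 + k)) + blk e Mv (P N Mm i + N i + 1 + k) := by
  have hb := P_bound he hi
  have h1 : blk e Mv (P N Mm i + N i + 1 + k) ≤ blk e Mv (P N Mm i + N i) :=
    blk_anti e Mv (by omega)
  simp only [fa, fb, flb, P, Sn_succ] at *
  omega

/-- edge `b_i -- a_{i+1}` -/
lemma dba (he : e + 1 = P N Mm t) {i : ℕ} (hi : i + 1 < t) :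
    fa N Mm e Mv (i+1) ≤ fb N Mm e Mv i ∧
    fb N Mm e Mv i - fa N Mm e Mv (i+1)
      = (e - (P N Mm i + N i + Mm i + 1)) + blk e Mv (P N Mm i + N i + Mm i + 1) := by
  have hb := P_bound he (show i < t by omega)
  have hb2 := P_bound he hi
  rw [P_succ] at hb2
  have h1 : blk e Mv (P N Mm i + N i + Mm i + 1) ≤ blk e Mv (P N Mm i + N i) :=
    blk_anti e Mv (by omega)
  simp only [fa, fb, SA_succ, P, Sn_succ] at *
  omega

lemma gA_step {i k : ℕ} (hk : k < Mm i) :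
    gA N Mm e Mv i k < gA N Mm e Mv i (k+1) := by
  rw [gA_pos' (by omega : k + 1 ≠ 0)]
  have h3 : k + 1 - 1 = k := by omega
  rw [h3]
  rcases Nat.eq_zero_or_pos k with rfl | hk0
  · rw [gA_zero', flb]
    omega
  · rw [gA_pos' (by omega : k ≠ 0), flb, flb]
    have h1 : blk e Mv (P N Mm i + N i + 1 + k) ≤ blk e Mv (P N Mm i + N i + 1 + (k-1)) :=
      blk_anti e Mv (by omega)
    have h2 : blk e Mv (P N Mm i + N i + 1 + (k-1)) ≤ blk e Mv (P N Mm i + N i) :=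
      blk_anti e Mv (by omega)
    omega

lemma gA_block {i : ℕ} :
    gA N Mm e Mv i (Mm i) < gA N Mm e Mv (i+1) 0 := by
  rw [gA_zero']
  rcases Nat.eq_zero_or_pos (Mm i) with h0 | h0
  · rw [h0, gA_zero']
    simp only [fa, SA_succ, Sn_succ, h0]
    omega
  · rw [gA_pos' (by omega : Mm i ≠ 0), flb]
    have h1 : blk e Mv (P N Mm i + N i + 1 + (Mm i - 1)) ≤ blk e Mv (P N Mm i + N i) :=
      blk_anti e Mv (by omega)
    have h2 : blk e Mv (P N Mm i + N i + Mm i + 1) ≤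
        blk e Mv (P N Mm i + N i + 1 + (Mm i - 1)) :=
      blk_anti e Mv (by omega)
    simp only [fa, SA_succ, Sn_succ]
    omega

lemma gB_step (he : e + 1 = P N Mm t) {i k : ℕ} (hi : i < t) (hk : k < N i) :
    gB N Mm e Mv i (k+1) < gB N Mm e Mv i k := by
  have hb := P_bound he hi
  rw [gB_lt' hk]
  rcases Nat.lt_or_ge (k+1) (N i) with h | h
  · rw [gB_lt' h]
    have h1 : blk e Mv (P N Mm i + (k+1)) ≤ blk e Mv (P N Mm i + k) :=
      blk_anti e Mv (by omega)
    simp only [fla, P] at *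
    omega
  · rw [gB_ge' (by omega)]
    have hkN : k + 1 = N i := by omega
    have h1 : blk e Mv (P N Mm i + N i) ≤ blk e Mv (P N Mm i + k) :=
      blk_anti e Mv (by omega)
    simp only [fla, fb, P, Sn_succ] at *
    omega

lemma gB_block (he : e + 1 = P N Mm t) {i : ℕ} (hi : i + 1 < t) :
    gB N Mm e Mv (i+1) 0 < gB N Mm e Mv i (N i) := by
  have hb := P_bound he (show i < t by omega)
  have hb2 := P_bound he hi
  rw [P_succ] at hb2
  have h1 : blk e Mv (P N Mm i + N i + Mm i + 1) ≤ blk e Mv (P N Mm i + N i) :=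
    blk_anti e Mv (by omega)
  have hP : P N Mm i = Sn N i + Sn Mm i + 2 * i := rfl
  rw [gB_ge' (by omega : ¬ N i < N i)]
  rcases Nat.lt_or_ge 0 (N (i+1)) with h | h
  · rw [gB_lt' h]
    have h2 : blk e Mv (P N Mm (i+1) + 0) ≤ blk e Mv (P N Mm i + N i + Mm i + 1) :=
      blk_anti e Mv (by rw [P_succ]; omega)
    rw [P_succ] at h2
    simp only [fla, fb, SA_succ, Sn_succ, P_succ] at *
    omega
  · rw [gB_ge' (by omega)]
    have hN1 : N (i+1) = 0 := by omega
    have h2 : blk e Mv (P N Mm (i+1) + N (i+1)) ≤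
        blk e Mv (P N Mm i + N i + Mm i + 1) :=
      blk_anti e Mv (by rw [P_succ]; omega)
    rw [P_succ] at h2
    simp only [fb, SA_succ, Sn_succ, P_succ, hN1] at *
    omega

/-- max of A is below min of B -/
lemma bridge (he : e + 1 = P N Mm t) (ht : 0 < t) :
    gA N Mm e Mv (t-1) (Mm (t-1)) < gB N Mm e Mv (t-1) (N (t-1)) := by
  set i := t - 1 with hidef
  have hit : i + 1 = t := by omega
  have heq : e = P N Mm i + N i + Mm i + 1 := by
    rw [← hit] at he; rw [P_succ] at he; omega
  rw [gB_ge' (by omega : ¬ N i < N i)]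
  rcases Nat.eq_zero_or_pos (Mm i) with h0 | h0
  · rw [h0, gA_zero']
    simp only [fa, fb, P, Sn_succ] at *
    omega
  · rw [gA_pos' (by omega : Mm i ≠ 0), flb]
    have h1 : blk e Mv (P N Mm i + N i + 1 + (Mm i - 1)) ≤ blk e Mv (P N Mm i + N i) :=
      blk_anti e Mv (by omega)
    simp only [fa, fb, P, Sn_succ] at *
    omega

/-- the largest label -/
lemma gB_zero : gB N Mm e Mv 0 0 = e + blk e Mv 0 := by
  rcases Nat.lt_or_ge 0 (N 0) with h | h
  · rw [gB_lt' h]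
    simp [fla, Sn, SA_zero, P]
  · rw [gB_ge' (by omega)]
    have h0 : N 0 = 0 := by omega
    simp [fb, Sn, SA_zero, P, Finset.sum_range_succ, h0]

end

/-- the target set -/
def T (d Mv : ℕ) : Finset ℕ :=
  (Finset.Icc 1 (d * (Mv + 1) - 1)) \
    ((Finset.Icc 1 (d - 1)).image (fun k => (Mv + 1) * k))

lemma T_mem {d Mv : ℕ} (hM : 0 < Mv) (x : ℕ) :
    x ∈ T d Mv ↔ 1 ≤ x ∧ x ≤ d * (Mv + 1) - 1 ∧ ¬ (Mv + 1) ∣ x := by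
  simp only [T, Finset.mem_sdiff, Finset.mem_Icc, Finset.mem_image, not_exists]
  constructor
  · rintro ⟨⟨h1, h2⟩, h3⟩
    refine ⟨h1, h2, ?_⟩
    rintro ⟨k, rfl⟩
    refine h3 k ⟨⟨?_, ?_⟩, rfl⟩
    · by_contra h
      have : k = 0 := by omega
      subst this; simp at h1
    · by_contra h
      have hk : d ≤ k := by omega
      have h5 : (Mv + 1) * d ≤ (Mv + 1) * k := Nat.mul_le_mul_left _ hk
      have h6 : (Mv + 1) * d = d * (Mv + 1) := by ring
      omega
  · rintro ⟨h1, h2, h3⟩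
    refine ⟨⟨h1, h2⟩, ?_⟩
    rintro k ⟨⟨hk1, hk2⟩, rfl⟩
    exact h3 ⟨k, rfl⟩

lemma D_mem {d Mv e : ℕ} (hM : 0 < Mv) (he : e = d * Mv) {j : ℕ}
    (hj : 1 ≤ j) (hje : j ≤ e) : j + (j - 1) / Mv ∈ T d Mv := by
  rw [T_mem hM]
  obtain ⟨q, r, hrM, hdm, hqq⟩ : ∃ q r, r < Mv ∧ j - 1 = Mv * q + r ∧ (j-1)/Mv = q :=
    ⟨(j-1)/Mv, (j-1) % Mv, Nat.mod_lt _ hM, (Nat.div_add_mod (j-1) Mv).symm, rfl⟩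
  rw [hqq]
  have hcomm : Mv * d = d * Mv := by ring
  have hqd : q < d := by
    have h1 : Mv * q < Mv * d := by omega
    exact Nat.lt_of_mul_lt_mul_left h1
  have key : j + q = (Mv + 1) * q + (r + 1) := by
    have : (Mv + 1) * q = Mv * q + q := by ring
    omega
  refine ⟨by omega, ?_, ?_⟩
  · have h1 : (Mv + 1) * (q + 1) ≤ (Mv + 1) * d := Nat.mul_le_mul_left _ (by omega)
    have h2 : (Mv + 1) * (q + 1) = (Mv + 1) * q + Mv + 1 := by ring
    have h3 : (Mv + 1) * d = d * (Mv + 1) := by ring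
    omega
  · rw [key]
    rintro ⟨c, hc⟩
    have hcq : q < c := by
      by_contra h
      have : (Mv + 1) * c ≤ (Mv + 1) * q := Nat.mul_le_mul_left _ (by omega)
      omega
    have : (Mv + 1) * (q + 1) ≤ (Mv + 1) * c := Nat.mul_le_mul_left _ (by omega)
    have h2 : (Mv + 1) * (q + 1) = (Mv + 1) * q + Mv + 1 := by ring
    omega

lemma D_surj {d Mv e : ℕ} (hM : 0 < Mv) (he : e = d * Mv) {y : ℕ}
    (hy : y ∈ T d Mv) : ∃ j, 1 ≤ j ∧ j ≤ e ∧ j + (j - 1) / Mv = y := by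
  rw [T_mem hM] at hy
  obtain ⟨h1, h2, h3⟩ := hy
  obtain ⟨q, s, hsM, hdm⟩ : ∃ q s, s < Mv + 1 ∧ y = (Mv + 1) * q + s :=
    ⟨y / (Mv+1), y % (Mv+1), Nat.mod_lt _ (by omega), (Nat.div_add_mod y (Mv+1)).symm⟩
  have hs0 : s ≠ 0 := by
    rintro rfl
    exact h3 ⟨q, by omega⟩
  have hqd : q < d := by
    by_contra h
    have : (Mv + 1) * d ≤ (Mv + 1) * q := Nat.mul_le_mul_left _ (by omega)
    have h3' : (Mv + 1) * d = d * (Mv + 1) := by ring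
    omega
  refine ⟨Mv * q + s, by omega, ?_, ?_⟩
  · have h4 : Mv * (q + 1) ≤ Mv * d := Nat.mul_le_mul_left _ (by omega)
    have h5 : Mv * (q+1) = Mv * q + Mv := by ring
    have h6 : Mv * d = d * Mv := by ring
    omega
  · have hsub : Mv * q + s - 1 = Mv * q + (s - 1) := by omega
    rw [hsub, Nat.mul_add_div hM, Nat.div_eq_of_lt (by omega)]
    have : (Mv + 1) * q = Mv * q + q := by ring
    omega


lemma gA_succ {N Mm : ℕ → ℕ} {e Mv i k : ℕ} :
    gA N Mm e Mv i (k+1) = flb N Mm e Mv i k := by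
  rw [gA_pos' (Nat.succ_ne_zero k)]
  simp

lemma D_mem' {d Mv e x : ℕ} (hM : 0 < Mv) (he : e = d * Mv) (hx : x < e) :
    (e - x) + blk e Mv x ∈ T d Mv := by
  simp only [blk]
  exact D_mem hM he (by omega) (by omega)

lemma D_surj' {d Mv e y : ℕ} (hM : 0 < Mv) (he : e = d * Mv) (hy : y ∈ T d Mv) :
    ∃ x, x < e ∧ (e - x) + blk e Mv x = y := by
  obtain ⟨j, hj1, hj2, hj3⟩ := D_surj hM he hy
  refine ⟨e - j, by omega, ?_⟩
  have hxy : e - (e - j) = j := by omega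
  simp only [blk]
  rw [hxy]
  exact hj3

lemma blk_zero_val {d Mv e : ℕ} (hd : 0 < d) (hM : 0 < Mv) (he : e = d * Mv) :
    blk e Mv 0 = d - 1 := by
  obtain ⟨d', rfl⟩ : ∃ d', d = d' + 1 := ⟨d - 1, by omega⟩
  have h0 : (d' + 1) * Mv = Mv * d' + Mv := by ring
  have h1 : e - 0 - 1 = Mv * d' + (Mv - 1) := by omega
  rw [blk, h1, Nat.mul_add_div hM, Nat.div_eq_of_lt (by omega)]
  omega

/-- generic increasing double chain -/
lemma chain_lt {g : ℕ → ℕ → ℕ} {w : ℕ → ℕ} {t : ℕ}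
    (h1 : ∀ i k, i < t → k < w i → g i k < g i (k+1))
    (h2 : ∀ i, i + 1 < t → g i (w i) < g (i+1) 0) :
    ∀ i k i' k', i' < t → k ≤ w i → k' ≤ w i' →
      (i < i' ∨ (i = i' ∧ k < k')) → g i k < g i' k' := by
  have row : ∀ i k k', i < t → k ≤ k' → k' ≤ w i → g i k ≤ g i k' := by
    intro i k k' hit hkk hk'
    induction k', hkk using Nat.le_induction with
    | base => exact le_rfl
    | succ k'' hk ih =>
        exact le_trans (ih (by omega)) (le_of_lt (h1 i k'' hit (by omega)))
  have rows : ∀ i i', i < i' → i' < t → g i (w i) < g i' 0 := by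
    intro i i' hii hi't
    induction i', hii using Nat.le_induction with
    | base => exact h2 i hi't
    | succ i'' hk ih =>
        calc g i (w i) < g i'' 0 := ih (by omega)
        _ ≤ g i'' (w i'') := row i'' 0 (w i'') (by omega) (by omega) le_rfl
        _ < g (i''+1) 0 := h2 i'' hi't
  intro i k i' k' hi't hk hk' hlex
  rcases hlex with h | ⟨rfl, h⟩
  · calc g i k ≤ g i (w i) := row i k (w i) (by omega) hk le_rfl
    _ < g i' 0 := rows i i' h hi't
    _ ≤ g i' k' := row i' 0 k' hi't (by omega) hk'
  · calc g i k < g i (k+1) := h1 i k hi't (by omega)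
    _ ≤ g i k' := row i (k+1) k' hi't (by omega) hk'

/-- generic decreasing double chain -/
lemma chain_gt {g : ℕ → ℕ → ℕ} {w : ℕ → ℕ} {t : ℕ}
    (h1 : ∀ i k, i < t → k < w i → g i (k+1) < g i k)
    (h2 : ∀ i, i + 1 < t → g (i+1) 0 < g i (w i)) :
    ∀ i k i' k', i' < t → k ≤ w i → k' ≤ w i' →
      (i < i' ∨ (i = i' ∧ k < k')) → g i' k' < g i k := by
  have row : ∀ i k k', i < t → k ≤ k' → k' ≤ w i → g i k' ≤ g i k := by
    intro i k k' hit hkk hk'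
    induction k', hkk using Nat.le_induction with
    | base => exact le_rfl
    | succ k'' hk ih =>
        exact le_trans (le_of_lt (h1 i k'' hit (by omega))) (ih (by omega))
  have rows : ∀ i i', i < i' → i' < t → g i' 0 < g i (w i) := by
    intro i i' hii hi't
    induction i', hii using Nat.le_induction with
    | base => exact h2 i hi't
    | succ i'' hk ih =>
        calc g (i''+1) 0 < g i'' (w i'') := h2 i'' hi't
        _ ≤ g i'' 0 := row i'' 0 (w i'') (by omega) (by omega) le_rfl
        _ < g i (w i) := ih (by omega)
  intro i k i' k' hi't hk hk' hlex
  rcases hlex with h | ⟨rfl, h⟩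
  · calc g i' k' ≤ g i' 0 := row i' 0 k' hi't (by omega) hk'
    _ < g i (w i) := rows i i' h hi't
    _ ≤ g i k := row i k (w i) (by omega) hk le_rfl
  · calc g i k' ≤ g i (k+1) := row i (k+1) k' hi't (by omega) hk'
    _ < g i k := h1 i k hi't (by omega)

/-- locating the block containing `x` -/
lemma locate {N Mm : ℕ → ℕ} {t x : ℕ} (hx : x < P N Mm t) :
    ∃ i, i < t ∧ P N Mm i ≤ x ∧ x < P N Mm (i+1) := by
  induction t with
  | zero => simp [P, Sn] at hx
  | succ t ih =>
    by_cases h : x < P N Mm t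
    · obtain ⟨i, h1, h2, h3⟩ := ih h
      exact ⟨i, by omega, h2, h3⟩
    · exact ⟨t, by omega, by omega, hx⟩


/-- the labeling -/
def theF (t : ℕ) (n m : Fin t → ℕ) (N Mm : ℕ → ℕ) (e Mv : ℕ) : CatV t n m → ℕ
  | Sum.inl (Sum.inl i) => fa N Mm e Mv i
  | Sum.inl (Sum.inr i) => fb N Mm e Mv i
  | Sum.inr (Sum.inl ⟨i, k⟩) => fla N Mm e Mv i k
  | Sum.inr (Sum.inr ⟨i, k⟩) => flb N Mm e Mv i k

end Stmt4

open Stmt4 in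
/-- every caterpillar with `e` edges admits a `d`-divisible
`α`-labeling for every divisor `d` of `e` (here `m = e / d`). -/
theorem stmt_4 (t : ℕ) (ht : 0 < t) (n m : Fin t → ℕ) (d : ℕ) (hd : 0 < d)
    (hdvd : d ∣ 2 * t - 1 + (∑ i, n i) + (∑ i, m i)) :
    ∃ f : CatV t n m → ℕ,
      Function.Injective f ∧
      (∀ v, f v ≤ d * ((2 * t - 1 + (∑ i, n i) + (∑ i, m i)) / d + 1) - 1) ∧
      diffSet (caterpillar t n m) f =
        ↑((Finset.Icc 1 (d * ((2 * t - 1 + (∑ i, n i) + (∑ i, m i)) / d + 1) - 1)) \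
          ((Finset.Icc 1 (d - 1)).image
            (fun k => ((2 * t - 1 + (∑ i, n i) + (∑ i, m i)) / d + 1) * k))) ∧
      ((∀ a b : CatV t n m, catInA a → ¬ catInA b → f a < f b) ∨
       (∀ a b : CatV t n m, ¬ catInA a → catInA b → f a < f b)) := by
  classical
  obtain ⟨Nn, hNn⟩ : ∃ Nn : ℕ → ℕ, ∀ i : Fin t, Nn i.val = n i :=
    ⟨fun j => if h : j < t then n ⟨j, h⟩ else 0, fun i => by simp [i.isLt]⟩
  obtain ⟨Nm, hNm⟩ : ∃ Nm : ℕ → ℕ, ∀ i : Fin t, Nm i.val = m i :=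
    ⟨fun j => if h : j < t then m ⟨j, h⟩ else 0, fun i => by simp [i.isLt]⟩
  set E := 2 * t - 1 + (∑ i, n i) + (∑ i, m i) with hE
  set Mv := E / d with hMvdef
  have hsn : Sn Nn t = ∑ i, n i := by
    rw [Sn, ← Fin.sum_univ_eq_sum_range]
    exact Finset.sum_congr rfl fun i _ => hNn i
  have hsm : Sn Nm t = ∑ i, m i := by
    rw [Sn, ← Fin.sum_univ_eq_sum_range]
    exact Finset.sum_congr rfl fun i _ => hNm i
  have he : E + 1 = P Nn Nm t := by
    rw [P, hsn, hsm]; omega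
  have hdM : E = d * Mv := (Nat.mul_div_cancel' hdvd).symm
  have hE1 : 1 ≤ E := by omega
  have hM : 0 < Mv := by
    rcases Nat.eq_zero_or_pos Mv with h | h
    · rw [h, Nat.mul_zero] at hdM; omega
    · exact h
  -- the chains
  have hA := chain_lt (t := t) (w := Nm) (g := gA Nn Nm E Mv)
    (fun i k _ hk => gA_step hk) (fun i _ => gA_block)
  have hB := chain_gt (t := t) (w := Nn) (g := gB Nn Nm E Mv)
    (fun i k hi hk => gB_step he hi hk) (fun i hi => gB_block he hi)
  have hAle : ∀ i k, i < t → k ≤ Nm i →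
      gA Nn Nm E Mv i k ≤ gA Nn Nm E Mv (t-1) (Nm (t-1)) := by
    intro i k hi hk
    rcases Nat.lt_or_ge i (t-1) with h | h
    · exact le_of_lt (hA i k (t-1) (Nm (t-1)) (by omega) hk le_rfl (Or.inl h))
    · have hieq : i = t - 1 := by omega
      subst hieq
      rcases Nat.lt_or_ge k (Nm (t-1)) with h2 | h2
      · exact le_of_lt (hA _ k _ _ (by omega) hk le_rfl (Or.inr ⟨rfl, h2⟩))
      · have : k = Nm (t-1) := by omega
        rw [this]
  have hBge : ∀ i k, i < t → k ≤ Nn i →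
      gB Nn Nm E Mv (t-1) (Nn (t-1)) ≤ gB Nn Nm E Mv i k := by
    intro i k hi hk
    rcases Nat.lt_or_ge i (t-1) with h | h
    · exact le_of_lt (hB i k (t-1) (Nn (t-1)) (by omega) hk le_rfl (Or.inl h))
    · have hieq : i = t - 1 := by omega
      subst hieq
      rcases Nat.lt_or_ge k (Nn (t-1)) with h2 | h2
      · exact le_of_lt (hB _ k _ _ (by omega) hk le_rfl (Or.inr ⟨rfl, h2⟩))
      · have : k = Nn (t-1) := by omega
        rw [this]
  have hB0 : ∀ i k, i < t → k ≤ Nn i → gB Nn Nm E Mv i k ≤ gB Nn Nm E Mv 0 0 := by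
    intro i k hi hk
    rcases Nat.eq_zero_or_pos i with rfl | h
    · rcases Nat.eq_zero_or_pos k with rfl | h2
      · exact le_rfl
      · exact le_of_lt (hB 0 0 0 k hi (Nat.zero_le _) hk (Or.inr ⟨rfl, h2⟩))
    · exact le_of_lt (hB 0 0 i k hi (Nat.zero_le _) hk (Or.inl h))
  have hAB : ∀ i k i' k', i < t → i' < t → k ≤ Nm i → k' ≤ Nn i' →
      gA Nn Nm E Mv i k < gB Nn Nm E Mv i' k' := by
    intro i k i' k' hi hi' hk hk'
    exact lt_of_le_of_lt (hAle i k hi hk)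
      (lt_of_lt_of_le (bridge he ht) (hBge i' k' hi' hk'))
  -- coordinates of the labeling
  have hFa : ∀ i : Fin t, theF t n m Nn Nm E Mv (Sum.inl (Sum.inl i))
      = gA Nn Nm E Mv i.val 0 := fun i => (gA_zero').symm
  have hFlb : ∀ (i : Fin t) (k : Fin (m i)),
      theF t n m Nn Nm E Mv (Sum.inr (Sum.inr ⟨i, k⟩))
      = gA Nn Nm E Mv i.val (k.val + 1) := fun i k => (gA_succ).symm
  have hFb : ∀ i : Fin t, theF t n m Nn Nm E Mv (Sum.inl (Sum.inr i))
      = gB Nn Nm E Mv i.val (Nn i.val) := fun i => (gB_ge' (lt_irrefl _)).symm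
  have hFla : ∀ (i : Fin t) (k : Fin (n i)),
      theF t n m Nn Nm E Mv (Sum.inr (Sum.inl ⟨i, k⟩))
      = gB Nn Nm E Mv i.val k.val := by
    intro i k
    have hkn : (k : ℕ) < Nn i.val := by
      have h := hNn i; omega
    exact (gB_lt' hkn).symm
  have hmB : ∀ (i : Fin t) (k : Fin (m i)), (k : ℕ) + 1 ≤ Nm i.val := by
    intro i k; have h := hNm i; omega
  have hnB : ∀ (i : Fin t) (k : Fin (n i)), (k : ℕ) ≤ Nn i.val := by
    intro i k; have h := hNn i; omega
  refine ⟨theF t n m Nn Nm E Mv, ?_, ?_, ?_, ?_⟩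
  · -- injectivity
    intro u v huv
    rcases u with (ui | ui) | (⟨ui, uk⟩ | ⟨ui, uk⟩) <;>
      rcases v with (vi | vi) | (⟨vi, vk⟩ | ⟨vi, vk⟩)
    -- a vs a
    · rw [hFa, hFa] at huv
      suffices h : ui = vi by rw [h]
      by_contra hne
      rcases Nat.lt_trichotomy ui.val vi.val with h | h | h
      · exact absurd huv (ne_of_lt (hA _ 0 _ 0 vi.isLt (Nat.zero_le _) (Nat.zero_le _) (Or.inl h)))
      · exact hne (Fin.ext h)
      · exact absurd huv.symm (ne_of_lt (hA _ 0 _ 0 ui.isLt (Nat.zero_le _) (Nat.zero_le _) (Or.inl h)))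
    -- a vs b
    · rw [hFa, hFb] at huv
      exact absurd huv (ne_of_lt (hAB _ 0 _ _ ui.isLt vi.isLt (Nat.zero_le _) le_rfl))
    -- a vs la
    · rw [hFa, hFla] at huv
      exact absurd huv (ne_of_lt (hAB _ 0 _ _ ui.isLt vi.isLt (Nat.zero_le _) (hnB vi vk)))
    -- a vs lb
    · rw [hFa, hFlb] at huv
      rcases Nat.lt_trichotomy ui.val vi.val with h | h | h
      · exact absurd huv (ne_of_lt (hA _ 0 _ _ vi.isLt (Nat.zero_le _) (hmB vi vk) (Or.inl h)))
      · exact absurd huv (ne_of_lt (hA _ 0 _ _ vi.isLt (Nat.zero_le _) (hmB vi vk) (Or.inr ⟨h, by omega⟩)))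
      · exact absurd huv.symm (ne_of_lt (hA _ _ _ 0 ui.isLt (hmB vi vk) (Nat.zero_le _) (Or.inl h)))
    -- b vs a
    · rw [hFb, hFa] at huv
      exact absurd huv.symm (ne_of_lt (hAB _ 0 _ _ vi.isLt ui.isLt (Nat.zero_le _) le_rfl))
    -- b vs b
    · rw [hFb, hFb] at huv
      suffices h : ui = vi by rw [h]
      by_contra hne
      rcases Nat.lt_trichotomy ui.val vi.val with h | h | h
      · exact absurd huv.symm (ne_of_lt (hB _ _ _ _ vi.isLt le_rfl le_rfl (Or.inl h)))
      · exact hne (Fin.ext h)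
      · exact absurd huv (ne_of_lt (hB _ _ _ _ ui.isLt le_rfl le_rfl (Or.inl h)))
    -- b vs la
    · rw [hFb, hFla] at huv
      have hkn : (vk : ℕ) < Nn vi.val := by have h := hNn vi; omega
      rcases Nat.lt_trichotomy ui.val vi.val with h | h | h
      · exact absurd huv.symm (ne_of_lt (hB _ _ _ _ vi.isLt le_rfl (hnB vi vk) (Or.inl h)))
      · have hieq : ui = vi := Fin.ext h
        subst hieq
        exact absurd huv (ne_of_lt (hB _ _ _ _ ui.isLt (hnB ui vk) le_rfl
          (Or.inr ⟨rfl, hkn⟩)))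
      · exact absurd huv (ne_of_lt (hB _ _ _ _ ui.isLt (hnB vi vk) le_rfl (Or.inl h)))
    -- b vs lb
    · rw [hFb, hFlb] at huv
      exact absurd huv.symm (ne_of_lt (hAB _ _ _ _ vi.isLt ui.isLt (hmB vi vk) le_rfl))
    -- la vs a
    · rw [hFla, hFa] at huv
      exact absurd huv.symm (ne_of_lt (hAB _ 0 _ _ vi.isLt ui.isLt (Nat.zero_le _) (hnB ui uk)))
    -- la vs b
    · rw [hFla, hFb] at huv
      have hkn : (uk : ℕ) < Nn ui.val := by have h := hNn ui; omega
      rcases Nat.lt_trichotomy ui.val vi.val with h | h | h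
      · exact absurd huv.symm (ne_of_lt (hB _ _ _ _ vi.isLt (hnB ui uk) le_rfl (Or.inl h)))
      · have hieq : ui = vi := Fin.ext h
        subst hieq
        exact absurd huv.symm (ne_of_lt (hB _ _ _ _ ui.isLt (hnB ui uk) le_rfl
          (Or.inr ⟨rfl, hkn⟩)))
      · exact absurd huv (ne_of_lt (hB _ _ _ _ ui.isLt le_rfl (hnB ui uk) (Or.inl h)))
    -- la vs la
    · rw [hFla, hFla] at huv
      rcases Nat.lt_trichotomy ui.val vi.val with h | h | h
      · exact absurd huv.symm (ne_of_lt (hB _ _ _ _ vi.isLt (hnB ui uk) (hnB vi vk) (Or.inl h)))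
      · have hieq : ui = vi := Fin.ext h
        subst hieq
        rcases Nat.lt_trichotomy uk.val vk.val with h2 | h2 | h2
        · exact absurd huv.symm (ne_of_lt (hB _ _ _ _ ui.isLt (hnB ui uk) (hnB ui vk)
            (Or.inr ⟨rfl, h2⟩)))
        · have : uk = vk := Fin.ext h2
          rw [this]
        · exact absurd huv (ne_of_lt (hB _ _ _ _ ui.isLt (hnB ui vk) (hnB ui uk)
            (Or.inr ⟨rfl, h2⟩)))
      · exact absurd huv (ne_of_lt (hB _ _ _ _ ui.isLt (hnB vi vk) (hnB ui uk) (Or.inl h)))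
    -- la vs lb
    · rw [hFla, hFlb] at huv
      exact absurd huv.symm (ne_of_lt (hAB _ _ _ _ vi.isLt ui.isLt (hmB vi vk) (hnB ui uk)))
    -- lb vs a
    · rw [hFlb, hFa] at huv
      rcases Nat.lt_trichotomy ui.val vi.val with h | h | h
      · exact absurd huv (ne_of_lt (hA _ _ _ 0 vi.isLt (hmB ui uk) (Nat.zero_le _) (Or.inl h)))
      · exact absurd huv.symm (ne_of_lt (hA _ 0 _ _ ui.isLt (Nat.zero_le _) (hmB ui uk)
          (Or.inr ⟨h.symm, by omega⟩)))
      · exact absurd huv.symm (ne_of_lt (hA _ 0 _ _ ui.isLt (Nat.zero_le _) (hmB ui uk) (Or.inl h)))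
    -- lb vs b
    · rw [hFlb, hFb] at huv
      exact absurd huv (ne_of_lt (hAB _ _ _ _ ui.isLt vi.isLt (hmB ui uk) le_rfl))
    -- lb vs la
    · rw [hFlb, hFla] at huv
      exact absurd huv (ne_of_lt (hAB _ _ _ _ ui.isLt vi.isLt (hmB ui uk) (hnB vi vk)))
    -- lb vs lb
    · rw [hFlb, hFlb] at huv
      rcases Nat.lt_trichotomy ui.val vi.val with h | h | h
      · exact absurd huv (ne_of_lt (hA _ _ _ _ vi.isLt (hmB ui uk) (hmB vi vk) (Or.inl h)))
      · have hieq : ui = vi := Fin.ext h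
        subst hieq
        rcases Nat.lt_trichotomy uk.val vk.val with h2 | h2 | h2
        · exact absurd huv (ne_of_lt (hA _ _ _ _ ui.isLt (hmB ui uk) (hmB ui vk)
            (Or.inr ⟨rfl, by omega⟩)))
        · have : uk = vk := Fin.ext h2
          rw [this]
        · exact absurd huv.symm (ne_of_lt (hA _ _ _ _ ui.isLt (hmB ui vk) (hmB ui uk)
            (Or.inr ⟨rfl, by omega⟩)))
      · exact absurd huv.symm (ne_of_lt (hA _ _ _ _ ui.isLt (hmB vi vk) (hmB ui uk) (Or.inl h)))
  · -- range bound
    have htopval : gB Nn Nm E Mv 0 0 = d * (Mv + 1) - 1 := by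
      rw [gB_zero, blk_zero_val hd hM hdM]
      have hdd : d * (Mv + 1) = d * Mv + d := by ring
      omega
    have hbnd : ∀ v, theF t n m Nn Nm E Mv v ≤ gB Nn Nm E Mv 0 0 := by
      intro v
      rcases v with (vi | vi) | (⟨vi, vk⟩ | ⟨vi, vk⟩)
      · rw [hFa]
        exact le_of_lt (lt_of_lt_of_le
          (hAB _ 0 0 0 vi.isLt ht (Nat.zero_le _) (Nat.zero_le _)) (hB0 0 0 ht (Nat.zero_le _)))
      · rw [hFb]
        exact hB0 _ _ vi.isLt le_rfl
      · rw [hFla]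
        exact hB0 _ _ vi.isLt (hnB vi vk)
      · rw [hFlb]
        exact le_of_lt (lt_of_lt_of_le
          (hAB _ _ 0 0 vi.isLt ht (hmB vi vk) (Nat.zero_le _)) (hB0 0 0 ht (Nat.zero_le _)))
    intro v
    rw [← htopval]
    exact hbnd v
  · -- the difference set
    show diffSet (caterpillar t n m) (theF t n m Nn Nm E Mv) = ↑(T d Mv)
    ext x
    constructor
    · rintro ⟨u, v, hadj, rfl⟩
      rw [caterpillar, SimpleGraph.fromRel_adj] at hadj
      obtain ⟨hne, hrel⟩ := hadj
      rw [Finset.mem_coe]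
      rcases u with (ui | ui) | (⟨ui, uk⟩ | ⟨ui, uk⟩) <;>
        rcases v with (vi | vi) | (⟨vi, vk⟩ | ⟨vi, vk⟩) <;>
        simp only [catRel, or_false, false_or] at hrel
      -- a vs b
      · rcases hrel with rfl | hij
        · -- edge a_i b_i
          have hb := P_bound he ui.isLt
          have hval : ((theF t n m Nn Nm E Mv (Sum.inl (Sum.inl ui)) : ℤ)
              - theF t n m Nn Nm E Mv (Sum.inl (Sum.inr ui))).natAbs
              = (E - (P Nn Nm ui.val + Nn ui.val)) + blk E Mv (P Nn Nm ui.val + Nn ui.val) := by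
            show ((fa Nn Nm E Mv ui.val : ℤ) - fb Nn Nm E Mv ui.val).natAbs = _
            have h := dab (Mv := Mv) he ui.isLt
            omega
          rw [hval]
          exact D_mem' hM hdM (by omega)
        · -- edge a_{j+1} b_j  (ui = vi + 1)
          have hvit : vi.val + 1 < t := by omega
          have hb := P_bound he hvit
          rw [P_succ] at hb
          have hval : ((theF t n m Nn Nm E Mv (Sum.inl (Sum.inl ui)) : ℤ)
              - theF t n m Nn Nm E Mv (Sum.inl (Sum.inr vi))).natAbs
              = (E - (P Nn Nm vi.val + Nn vi.val + Nm vi.val + 1))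
                + blk E Mv (P Nn Nm vi.val + Nn vi.val + Nm vi.val + 1) := by
            show ((fa Nn Nm E Mv ui.val : ℤ) - fb Nn Nm E Mv vi.val).natAbs = _
            rw [hij]
            have h := dba (Mv := Mv) he hvit
            omega
          rw [hval]
          exact D_mem' hM hdM (by omega)
      -- a vs la
      · rcases hrel with rfl
        have hb := P_bound he ui.isLt
        have hkn : (vk : ℕ) < Nn ui.val := by have h := hNn ui; omega
        have hval : ((theF t n m Nn Nm E Mv (Sum.inl (Sum.inl ui)) : ℤ)
            - theF t n m Nn Nm E Mv (Sum.inr (Sum.inl ⟨ui, vk⟩))).natAbs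
            = (E - (P Nn Nm ui.val + vk.val)) + blk E Mv (P Nn Nm ui.val + vk.val) := by
          show ((fa Nn Nm E Mv ui.val : ℤ) - fla Nn Nm E Mv ui.val vk.val).natAbs = _
          have h := dla (Mv := Mv) he ui.isLt hkn
          omega
        rw [hval]
        exact D_mem' hM hdM (by omega)
      -- b vs a  (vi = ui or vi = ui + 1)
      · rcases hrel with rfl | hij
        · have hb := P_bound he vi.isLt
          have hval : ((theF t n m Nn Nm E Mv (Sum.inl (Sum.inr vi)) : ℤ)
              - theF t n m Nn Nm E Mv (Sum.inl (Sum.inl vi))).natAbs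
              = (E - (P Nn Nm vi.val + Nn vi.val)) + blk E Mv (P Nn Nm vi.val + Nn vi.val) := by
            show ((fb Nn Nm E Mv vi.val : ℤ) - fa Nn Nm E Mv vi.val).natAbs = _
            have h := dab (Mv := Mv) he vi.isLt
            omega
          rw [hval]
          exact D_mem' hM hdM (by omega)
        · have huit : ui.val + 1 < t := by have := vi.isLt; omega
          have hb := P_bound he huit
          rw [P_succ] at hb
          have hval : ((theF t n m Nn Nm E Mv (Sum.inl (Sum.inr ui)) : ℤ)
              - theF t n m Nn Nm E Mv (Sum.inl (Sum.inl vi))).natAbs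
              = (E - (P Nn Nm ui.val + Nn ui.val + Nm ui.val + 1))
                + blk E Mv (P Nn Nm ui.val + Nn ui.val + Nm ui.val + 1) := by
            show ((fb Nn Nm E Mv ui.val : ℤ) - fa Nn Nm E Mv vi.val).natAbs = _
            rw [hij]
            have h := dba (Mv := Mv) he huit
            omega
          rw [hval]
          exact D_mem' hM hdM (by omega)
      -- b vs lb
      · rcases hrel with rfl
        have hb := P_bound he ui.isLt
        have hkn : (vk : ℕ) < Nm ui.val := by have h := hNm ui; omega
        have hval : ((theF t n m Nn Nm E Mv (Sum.inl (Sum.inr ui)) : ℤ)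
            - theF t n m Nn Nm E Mv (Sum.inr (Sum.inr ⟨ui, vk⟩))).natAbs
            = (E - (P Nn Nm ui.val + Nn ui.val + 1 + vk.val))
              + blk E Mv (P Nn Nm ui.val + Nn ui.val + 1 + vk.val) := by
          show ((fb Nn Nm E Mv ui.val : ℤ) - flb Nn Nm E Mv ui.val vk.val).natAbs = _
          have h := dlb (Mv := Mv) he ui.isLt hkn
          omega
        rw [hval]
        exact D_mem' hM hdM (by omega)
      -- la vs a
      · rcases hrel with rfl
        have hb := P_bound he vi.isLt
        have hkn : (uk : ℕ) < Nn vi.val := by have h := hNn vi; omega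
        have hval : ((theF t n m Nn Nm E Mv (Sum.inr (Sum.inl ⟨vi, uk⟩)) : ℤ)
            - theF t n m Nn Nm E Mv (Sum.inl (Sum.inl vi))).natAbs
            = (E - (P Nn Nm vi.val + uk.val)) + blk E Mv (P Nn Nm vi.val + uk.val) := by
          show ((fla Nn Nm E Mv vi.val uk.val : ℤ) - fa Nn Nm E Mv vi.val).natAbs = _
          have h := dla (Mv := Mv) he vi.isLt hkn
          omega
        rw [hval]
        exact D_mem' hM hdM (by omega)
      -- lb vs b
      · rcases hrel with rfl
        have hb := P_bound he vi.isLt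
        have hkn : (uk : ℕ) < Nm vi.val := by have h := hNm vi; omega
        have hval : ((theF t n m Nn Nm E Mv (Sum.inr (Sum.inr ⟨vi, uk⟩)) : ℤ)
            - theF t n m Nn Nm E Mv (Sum.inl (Sum.inr vi))).natAbs
            = (E - (P Nn Nm vi.val + Nn vi.val + 1 + uk.val))
              + blk E Mv (P Nn Nm vi.val + Nn vi.val + 1 + uk.val) := by
          show ((flb Nn Nm E Mv vi.val uk.val : ℤ) - fb Nn Nm E Mv vi.val).natAbs = _
          have h := dlb (Mv := Mv) he vi.isLt hkn
          omega
        rw [hval]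
        exact D_mem' hM hdM (by omega)
    · intro hx
      rw [Finset.mem_coe] at hx
      obtain ⟨X, hXE, hXval⟩ := D_surj' hM hdM hx
      have hXP : X < P Nn Nm t := by omega
      obtain ⟨i, hit, hP1, hP2⟩ := locate hXP
      rw [P_succ] at hP2
      rcases Nat.lt_or_ge (X - P Nn Nm i) (Nn i) with hr | hr
      · -- leaf of a_i
        have hNni : Nn i = n ⟨i, hit⟩ := hNn ⟨i, hit⟩
        have hkn : X - P Nn Nm i < n ⟨i, hit⟩ := by omega
        refine ⟨Sum.inr (Sum.inl ⟨⟨i, hit⟩, ⟨X - P Nn Nm i, hkn⟩⟩),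
          Sum.inl (Sum.inl ⟨i, hit⟩), ?_, ?_⟩
        · rw [caterpillar, SimpleGraph.fromRel_adj]
          exact ⟨by simp, Or.inr rfl⟩
        · show ((fla Nn Nm E Mv i (X - P Nn Nm i) : ℤ) - fa Nn Nm E Mv i).natAbs = x
          have h := dla (Mv := Mv) he hit (show X - P Nn Nm i < Nn i from hr)
          have hPX : P Nn Nm i + (X - P Nn Nm i) = X := by omega
          rw [hPX] at h
          omega
      · rcases Nat.lt_or_ge (X - P Nn Nm i) (Nn i + 1) with hr2 | hr2
        · -- edge a_i b_i : X = P i + Nn i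
          have hXeq : X = P Nn Nm i + Nn i := by omega
          refine ⟨Sum.inl (Sum.inr ⟨i, hit⟩), Sum.inl (Sum.inl ⟨i, hit⟩), ?_, ?_⟩
          · rw [caterpillar, SimpleGraph.fromRel_adj]
            refine ⟨by simp, Or.inr (Or.inl rfl)⟩
          · show ((fb Nn Nm E Mv i : ℤ) - fa Nn Nm E Mv i).natAbs = x
            have h := dab (Mv := Mv) he hit
            rw [← hXeq] at h
            omega
        · rcases Nat.lt_or_ge (X - P Nn Nm i) (Nn i + 1 + Nm i) with hr3 | hr3
          · -- leaf of b_i : k = X - P i - Nn i - 1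
            have hNmi : Nm i = m ⟨i, hit⟩ := hNm ⟨i, hit⟩
            have hkm : X - P Nn Nm i - Nn i - 1 < m ⟨i, hit⟩ := by omega
            refine ⟨Sum.inl (Sum.inr ⟨i, hit⟩),
              Sum.inr (Sum.inr ⟨⟨i, hit⟩, ⟨X - P Nn Nm i - Nn i - 1, hkm⟩⟩), ?_, ?_⟩
            · rw [caterpillar, SimpleGraph.fromRel_adj]
              exact ⟨by simp, Or.inl rfl⟩
            · show ((fb Nn Nm E Mv i : ℤ)
                - flb Nn Nm E Mv i (X - P Nn Nm i - Nn i - 1)).natAbs = x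
              have h := dlb (Mv := Mv) he hit
                (show X - P Nn Nm i - Nn i - 1 < Nm i by omega)
              have hPX : P Nn Nm i + Nn i + 1 + (X - P Nn Nm i - Nn i - 1) = X := by omega
              rw [hPX] at h
              omega
          · -- edge b_i a_{i+1} : X = P i + Nn i + Nm i + 1
            have hXeq : X = P Nn Nm i + Nn i + Nm i + 1 := by omega
            have hi1t : i + 1 < t := by
              by_contra hcon
              have hit1 : t = i + 1 := by omega
              rw [hit1, P_succ] at he
              omega
            refine ⟨Sum.inl (Sum.inr ⟨i, hit⟩),
              Sum.inl (Sum.inl ⟨i + 1, hi1t⟩), ?_, ?_⟩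
            · rw [caterpillar, SimpleGraph.fromRel_adj]
              refine ⟨by simp, Or.inr (Or.inr rfl)⟩
            · show ((fb Nn Nm E Mv i : ℤ) - fa Nn Nm E Mv (i + 1)).natAbs = x
              have h := dba (Mv := Mv) he hi1t
              rw [← hXeq] at h
              omega
  · -- alpha condition
    left
    intro a b ha hb
    rcases a with (ai | ai) | (⟨ai, ak⟩ | ⟨ai, ak⟩) <;>
      rcases b with (bi | bi) | (⟨bi, bk⟩ | ⟨bi, bk⟩) <;>
      simp only [catInA] at ha hb <;> try exact absurd trivial hb
    · rw [hFa, hFb]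
      exact hAB _ 0 _ _ ai.isLt bi.isLt (Nat.zero_le _) le_rfl
    · rw [hFa, hFla]
      exact hAB _ 0 _ _ ai.isLt bi.isLt (Nat.zero_le _) (hnB bi bk)
    · rw [hFlb, hFb]
      exact hAB _ _ _ _ ai.isLt bi.isLt (hmB ai ak) le_rfl
    · rw [hFlb, hFla]
      exact hAB _ _ _ _ ai.isLt bi.isLt (hmB ai ak) (hnB bi bk)
end

section
/- A cycle graph C_k admits an α-labeling (a graceful labeling f with max_A f < min_B f on its bipartition) only if k ≡ 0 (mod 4). -/
/-!
Rosa's parity argument. Walking once around the cycle, the signed label differences sum to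
zero, so the sum of their absolute values is even; for a graceful labeling that sum is
`1 + ⋯ + k = k (k + 1) / 2`, which forces `k ≡ 0` or `3 (mod 4)`. A bipartite cycle has even
length, which rules out `k ≡ 3`.
-/

open Finset SimpleGraph

theorem SimpleGraph.isBipartite_of_forall_adj_mem_iff_notMem {V : Type*} {G : SimpleGraph V}
    {A : Set V} (hA : ∀ u v, G.Adj u v → (u ∈ A ↔ v ∉ A)) : G.IsBipartite :=
  IsBipartiteWith.isBipartite (s := A) (t := Aᶜ)
    { disjoint := disjoint_compl_right
      mem_of_adj := fun u v huv => by
        have := hA u v huv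
        by_cases hu : u ∈ A <;> simp_all }

theorem SimpleGraph.even_of_isBipartite_cycleGraph {n : ℕ}
    (h : (cycleGraph (n + 3)).IsBipartite) : Even (n + 3) := by
  simpa [cycleGraph.length_cycle] using
    two_colorable_iff_forall_loop_even.mp h 0 (cycleGraph.cycle n)

theorem even_sum_natAbs_sub_comp_perm {ι : Type*} [Fintype ι] (σ : Equiv.Perm ι) (f : ι → ℤ) :
    Even (∑ i, (f (σ i) - f i).natAbs) := by
  rw [← ZMod.natCast_eq_zero_iff_even]
  push_cast [ZMod.natAbs_mod_two]
  rw [Finset.sum_sub_distrib, Equiv.sum_comp σ (fun i => (f i : ZMod 2)), sub_self]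

theorem Finset.sum_comp_eq_of_subset_image_of_card_le {ι α M : Type*} [Fintype ι]
    [DecidableEq α] [AddCommMonoid M] {d : ι → α} {s : Finset α} (g : α → M)
    (hs : s ⊆ univ.image d) (hcard : Fintype.card ι ≤ #s) :
    ∑ i, g (d i) = ∑ a ∈ s, g a := by
  have himage : univ.image d = s :=
    (eq_of_subset_of_card_le hs (card_image_le.trans hcard)).symm
  have hinj : Set.InjOn d (univ : Finset ι) :=
    card_image_iff.mp (le_antisymm card_image_le (himage ▸ hcard))
  rw [← himage, sum_image hinj]

theorem Finset.sum_Icc_one_id_mul_two (n : ℕ) : (∑ i ∈ Icc 1 n, i) * 2 = n * (n + 1) := by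
  induction n with
  | zero => simp
  | succ n ih =>
    rw [sum_Icc_succ_top (by omega), add_mul, ih]
    ring

theorem diffSet_cycleGraph_subset_range {n : ℕ} (f : Fin (n + 1) → ℕ) :
    diffSet (cycleGraph (n + 1)) f ⊆ Set.range fun i => ((f (i + 1) : ℤ) - f i).natAbs := by
  rintro _ ⟨u, v, huv, rfl⟩
  cases n with
  | zero => exact absurd huv cycleGraph_one_adj
  | succ n =>
    rcases cycleGraph_adj.mp huv with h | h
    · obtain rfl : u = v + 1 := (sub_eq_iff_eq_add.mp h).trans (add_comm _ _)
      exact ⟨v, rfl⟩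
    · obtain rfl : v = u + 1 := (sub_eq_iff_eq_add.mp h).trans (add_comm _ _)
      exact ⟨u, by rw [← Int.natAbs_neg, neg_sub]⟩

theorem mod_four_eq_zero_or_three_of_even_mul_two_eq {S k : ℕ} (hS : Even S)
    (h : S * 2 = k * (k + 1)) : k % 4 = 0 ∨ k % 4 = 3 := by
  obtain ⟨r, rfl⟩ := hS
  have h4 : k * (k + 1) % 4 = 0 := by omega
  have hk := Nat.mod_lt k (show 4 > 0 by norm_num)
  rw [Nat.mul_mod, Nat.add_mod] at h4
  interval_cases k % 4 <;> simp_all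

theorem mod_four_eq_zero_or_three_of_Icc_subset_diffSet_cycleGraph {k : ℕ} (f : Fin k → ℕ)
    (h : ↑(Icc 1 k) ⊆ diffSet (cycleGraph k) f) : k % 4 = 0 ∨ k % 4 = 3 := by
  cases k with
  | zero => exact Or.inl rfl
  | succ n =>
    set d : Fin (n + 1) → ℕ := fun i => ((f (i + 1) : ℤ) - f i).natAbs
    have hsub : Icc 1 (n + 1) ⊆ univ.image d := fun m hm => by
      obtain ⟨i, hi⟩ := diffSet_cycleGraph_subset_range f (h (mem_coe.mpr hm))
      exact mem_image.mpr ⟨i, mem_univ i, hi⟩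
    have hsum : ∑ i, d i = ∑ m ∈ Icc 1 (n + 1), m :=
      sum_comp_eq_of_subset_image_of_card_le (fun m => m) hsub (by simp)
    have heven : Even (∑ i, d i) :=
      even_sum_natAbs_sub_comp_perm (Equiv.addRight 1) (fun i => (f i : ℤ))
    exact mod_four_eq_zero_or_three_of_even_mul_two_eq heven
      (hsum ▸ sum_Icc_one_id_mul_two (n + 1))

theorem stmt_7_general (k : ℕ)
    (h : ∃ (A : Set (Fin k)) (f : Fin k → ℕ),
      (∀ u v, (SimpleGraph.cycleGraph k).Adj u v → (u ∈ A ↔ v ∉ A)) ∧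
      Function.Injective f ∧
      (∀ v, f v ≤ k) ∧
      diffSet (SimpleGraph.cycleGraph k) f = ↑(Finset.Icc 1 k) ∧
      ((∀ a ∈ A, ∀ b ∉ A, f a < f b) ∨ (∀ a ∈ A, ∀ b ∉ A, f b < f a))) :
    4 ∣ k := by
  obtain ⟨A, f, hbip, -, -, hdiff, -⟩ := h
  rcases mod_four_eq_zero_or_three_of_Icc_subset_diffSet_cycleGraph f hdiff.ge with h0 | h3
  · exact Nat.dvd_of_mod_eq_zero h0
  · obtain ⟨n, rfl⟩ : ∃ n, k = n + 3 := ⟨k - 3, by omega⟩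
    obtain ⟨r, hr⟩ :=
      even_of_isBipartite_cycleGraph (isBipartite_of_forall_adj_mem_iff_notMem hbip)
    omega

/-- if the cycle `C_k` (`k ≥ 3`) admits an `α`-labeling
(a graceful labeling `f` with `max_A f < min_B f` on a bipartition `A`, `B`),
then `k ≡ 0 (mod 4)`. -/
theorem stmt_7 (k : ℕ) (hk : 3 ≤ k)
    (h : ∃ (A : Set (Fin k)) (f : Fin k → ℕ),
      (∀ u v, (SimpleGraph.cycleGraph k).Adj u v → (u ∈ A ↔ v ∉ A)) ∧
      Function.Injective f ∧
      (∀ v, f v ≤ k) ∧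
      diffSet (SimpleGraph.cycleGraph k) f = ↑(Finset.Icc 1 k) ∧
      ((∀ a ∈ A, ∀ b ∉ A, f a < f b) ∨ (∀ a ∈ A, ∀ b ∉ A, f b < f a))) :
    4 ∣ k :=
  stmt_7_general k h
end

section
/- For every positive integer k and every divisor d of 4k, the cycle C_{4k} admits a d-divisible α-labeling. -/
open Finset

/-- For `0 < m`, `skipMultiples m t` is the `t`-th positive integer not divisible by `m + 1`. -/
def skipMultiples (m t : ℕ) : ℕ := t + (t - 1) / m

section skipMultiples

variable {m : ℕ}

theorem strictMono_skipMultiples : StrictMono (skipMultiples m) :=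
  strictMono_nat_of_lt_succ fun t => by
    have : (t - 1) / m ≤ (t + 1 - 1) / m := Nat.div_le_div_right (by omega)
    unfold skipMultiples; omega

theorem skipMultiples_one : skipMultiples m 1 = 1 := by simp [skipMultiples]

theorem skipMultiples_succ {s : ℕ} (hs : 0 < s) :
    skipMultiples m (s + 1) = skipMultiples m s + 1 + if m ∣ s then 1 else 0 := by
  obtain ⟨s, rfl⟩ : ∃ r, s = r + 1 := ⟨s - 1, by omega⟩
  have := Nat.succ_div (a := s) (b := m)
  simp only [skipMultiples, Nat.add_sub_cancel] at this ⊢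
  omega

theorem skipMultiples_succ_sub_reflect {N s : ℕ} (hN : m ∣ N) (hs : 0 < s) (hsN : s < N) :
    skipMultiples m (N - s + 1) - skipMultiples m (N - s) =
      skipMultiples m (s + 1) - skipMultiples m s := by
  simp only [skipMultiples_succ hs, skipMultiples_succ (by omega : 0 < N - s),
    Nat.dvd_sub_iff_right hsN.le hN]
  omega

theorem skipMultiples_mul_add {q s : ℕ} (hs : 0 < s) (hsm : s ≤ m) :
    skipMultiples m (q * m + s) = q * (m + 1) + s := by
  have : (q * m + s - 1) / m = q := by
    rw [show q * m + s - 1 = s - 1 + m * q by rw [mul_comm]; omega,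
      Nat.add_mul_div_left _ _ (by omega), Nat.div_eq_of_lt (by omega), zero_add]
  rw [skipMultiples, this]; ring

theorem skipMultiples_mul {d : ℕ} (hm : 0 < m) (hd : 0 < d) :
    skipMultiples m (d * m) = d * (m + 1) - 1 := by
  obtain ⟨d, rfl⟩ : ∃ e, d = e + 1 := ⟨d - 1, by omega⟩
  rw [add_mul, one_mul, skipMultiples_mul_add hm le_rfl]; ring_nf; omega

end skipMultiples

theorem Nat.exists_eq_mul_add_of_pos {n t : ℕ} (hn : 0 < n) (ht : 0 < t) :
    ∃ q s, 0 < s ∧ s ≤ n ∧ t = q * n + s :=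
  ⟨(t - 1) / n, (t - 1) % n + 1, by omega, Nat.mod_lt _ hn,
    by have := Nat.div_add_mod' (t - 1) n; omega⟩

theorem image_skipMultiples_Icc {m : ℕ} (hm : 0 < m) (d : ℕ) :
    (Icc 1 (d * m)).image (skipMultiples m) =
      Icc 1 (d * (m + 1) - 1) \ (Icc 1 (d - 1)).image ((m + 1) * ·) := by
  ext x
  simp only [mem_image, mem_sdiff, mem_Icc, not_exists, not_and]
  constructor
  · rintro ⟨t, ⟨ht, htd⟩, rfl⟩
    obtain ⟨q, s, hs, hsm, rfl⟩ := Nat.exists_eq_mul_add_of_pos hm ht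
    have hqd : q + 1 ≤ d := Nat.lt_of_mul_lt_mul_right (a := m) (by omega)
    have hqdm := Nat.mul_le_mul_right (m + 1) hqd
    rw [skipMultiples_mul_add hs hsm]
    refine ⟨⟨by omega, by rw [add_one_mul] at hqdm; omega⟩, fun i _ hi => ?_⟩
    rw [mul_comm q] at hi
    rcases le_or_gt i q with hiq | hiq
    · have := Nat.mul_le_mul_left (m + 1) hiq; omega
    · have := Nat.mul_le_mul_left (m + 1) (show q + 1 ≤ i from hiq)
      rw [mul_add_one] at this; omega
  · rintro ⟨⟨hx, hxd⟩, hnot⟩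
    obtain ⟨q, s, hs, hsm, rfl⟩ := Nat.exists_eq_mul_add_of_pos (by omega : 0 < m + 1) hx
    have hqd : q + 1 ≤ d := Nat.lt_of_mul_lt_mul_right (a := m + 1) (by omega)
    have hsm' : s ≤ m := by
      by_contra! h
      have : q + 1 < d := Nat.lt_of_mul_lt_mul_right (a := m + 1) (by rw [add_one_mul]; omega)
      exact hnot (q + 1) ⟨by omega, by omega⟩ (by rw [show s = m + 1 by omega]; ring)
    refine ⟨q * m + s, ⟨by omega, ?_⟩, skipMultiples_mul_add hs hsm'⟩
    have := Nat.mul_le_mul_right m hqd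
    simp only [add_one_mul, mul_add_one] at this hxd; omega

theorem Fin.val_sub_eq_one_iff {n : ℕ} (hn : 1 < n) {u v : Fin n} :
    (u - v).val = 1 ↔ u.val = v.val + 1 ∨ u.val + n = v.val + 1 := by
  rcases le_or_gt v u with h | h
  · rw [Fin.coe_sub_iff_le.mpr h]; omega
  · rw [Fin.coe_sub_iff_lt.mpr h]; omega

theorem diffSet_cycleGraph {n : ℕ} (hn : 1 < n) (g : ℕ → ℕ) :
    diffSet (SimpleGraph.cycleGraph n) (fun v => g v) =
      {x | ∃ i, i + 1 < n ∧ ((g (i + 1) : ℤ) - g i).natAbs = x} ∪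
        {((g (n - 1) : ℤ) - g 0).natAbs} := by
  ext x
  simp only [diffSet, SimpleGraph.cycleGraph_adj', Fin.val_sub_eq_one_iff hn, Set.mem_union,
    Set.mem_ofPred_eq, Set.mem_singleton_iff]
  constructor
  · rintro ⟨u, v, h, rfl⟩
    have hu := u.isLt
    have hv := v.isLt
    rcases h with (h | h) | (h | h)
    · exact .inl ⟨v, by omega, by rw [h]⟩
    · exact .inr (by rw [show u.val = 0 by omega, show v.val = n - 1 by omega]; omega)
    · exact .inl ⟨u, by omega, by rw [h]; omega⟩
    · exact .inr (by rw [show v.val = 0 by omega, show u.val = n - 1 by omega])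
  · rintro (⟨i, hi, rfl⟩ | rfl)
    · exact ⟨⟨i + 1, hi⟩, ⟨i, by omega⟩, .inl (.inl rfl), rfl⟩
    · exact ⟨⟨n - 1, by omega⟩, ⟨0, by omega⟩, .inr (.inr (by simp; omega)), rfl⟩

namespace CycleAlphaLabeling

/-- The edge `{i, i + 1}` of the path gets the difference `skipMultiples m (rank k i)`: the ranks
run through `4k, …, 2k+1, 2k-1, …, 1`, leaving `2k` for the closing edge `{4k - 1, 0}`. -/
def rank (k i : ℕ) : ℕ := if i < 2 * k then 4 * k - i else 4 * k - i - 1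

def lowLabel (k m j : ℕ) : ℕ :=
  ∑ i ∈ range j, (skipMultiples m (rank k (2 * i)) - skipMultiples m (rank k (2 * i + 1)))

def highLabel (k m j : ℕ) : ℕ := lowLabel k m j + skipMultiples m (rank k (2 * j))

def label (k m i : ℕ) : ℕ := if Even i then lowLabel k m (i / 2) else highLabel k m (i / 2)

variable {k m : ℕ}

theorem rank_succ_lt {i : ℕ} (hi : i + 1 < 4 * k) : rank k (i + 1) < rank k i := by
  unfold rank; split_ifs <;> omega

theorem lowLabel_succ (j : ℕ) : lowLabel k m (j + 1) =
    lowLabel k m j + (skipMultiples m (rank k (2 * j)) - skipMultiples m (rank k (2 * j + 1))) :=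
  sum_range_succ _ j

theorem highLabel_eq_lowLabel_succ_add {j : ℕ} (hj : j < 2 * k) :
    highLabel k m j = lowLabel k m (j + 1) + skipMultiples m (rank k (2 * j + 1)) := by
  have := (strictMono_skipMultiples (m := m)).monotone
    (rank_succ_lt (k := k) (i := 2 * j) (by omega)).le
  rw [highLabel, lowLabel_succ]; omega

theorem lowLabel_strictMonoOn : StrictMonoOn (lowLabel k m) (Set.Iic (2 * k - 1)) :=
  strictMonoOn_Iic_of_lt_succ fun j hj => by
    have := strictMono_skipMultiples (m := m) (rank_succ_lt (k := k) (i := 2 * j) (by omega))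
    rw [Order.succ_eq_add_one, lowLabel_succ]; omega

theorem highLabel_strictAntiOn : StrictAntiOn (highLabel k m) (Set.Iic (2 * k - 1)) :=
  strictAntiOn_Iic_of_succ_lt fun j hj => by
    have := strictMono_skipMultiples (m := m) (rank_succ_lt (k := k) (i := 2 * j + 1) (by omega))
    rw [Order.succ_eq_add_one, highLabel_eq_lowLabel_succ_add (j := j) (by omega), highLabel,
      show 2 * (j + 1) = 2 * j + 1 + 1 by ring]
    omega

theorem lowLabel_lt_highLabel (hk : 0 < k) {i j : ℕ} (hi : i ≤ 2 * k - 1) (hj : j ≤ 2 * k - 1) :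
    lowLabel k m i < highLabel k m j := by
  have hlast : lowLabel k m (2 * k - 1) < highLabel k m (2 * k - 1) := by
    have := rank_succ_lt (k := k) (i := 2 * (2 * k - 1)) (by omega)
    have : rank k (2 * (2 * k - 1)) ≤ skipMultiples m _ := Nat.le_add_right _ _
    rw [highLabel]; omega
  calc lowLabel k m i ≤ lowLabel k m (2 * k - 1) :=
        lowLabel_strictMonoOn.monotoneOn hi Set.self_mem_Iic hi
    _ < highLabel k m (2 * k - 1) := hlast
    _ ≤ highLabel k m j := highLabel_strictAntiOn.antitoneOn hj Set.self_mem_Iic hj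

theorem lowLabel_last (hk : 0 < k) (hm : m ∣ 4 * k) :
    lowLabel k m (2 * k - 1) + 1 = skipMultiples m (2 * k) := by
  have hsum : lowLabel k m (2 * k - 1) =
      ∑ t ∈ range (2 * k - 1), (skipMultiples m (t + 1 + 1) - skipMultiples m (t + 1)) := by
    -- for `i < k` the `i`-th summand is the gap at the odd rank `4k - 2i - 1`, equal by
    -- reflection to the gap at `2i + 1`; for `i ≥ k` it is the gap at the even rank `4k - 2i - 2`
    refine sum_nbij' (fun i => if i < k then 2 * i else 4 * k - 2 * i - 3)
      (fun t => if t % 2 = 0 then t / 2 else (4 * k - 3 - t) / 2) ?_ ?_ ?_ ?_ fun i hi => ?_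
    iterate 4 (intro i hi; simp only [mem_range] at hi ⊢; split_ifs <;> omega)
    simp only [mem_range] at hi
    unfold rank
    split_ifs with h <;> try omega
    · rw [show 4 * k - 2 * i = 4 * k - (2 * i + 1) + 1 by omega,
        skipMultiples_succ_sub_reflect hm (by omega) (by omega)]
    · congr 2 <;> omega
  have htel := sum_range_tsub (f := fun t => skipMultiples m (t + 1))
    (strictMono_skipMultiples.monotone.comp fun _ _ h => by omega) (2 * k - 1)
  simp only [zero_add, skipMultiples_one, Nat.sub_add_cancel (by omega : 1 ≤ 2 * k)] at htel
  have := (strictMono_skipMultiples (m := m)).monotone (by omega : 1 ≤ 2 * k)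
  rw [skipMultiples_one] at this
  omega

theorem label_zero : label k m 0 = 0 := by
  simp [label, lowLabel]

theorem label_two_mul (j : ℕ) : label k m (2 * j) = lowLabel k m j := by
  simp [label]

theorem label_two_mul_add_one (j : ℕ) : label k m (2 * j + 1) = highLabel k m j := by
  simp [label, Nat.add_div_of_dvd_right]

theorem natAbs_label_succ_sub {i : ℕ} (hi : i + 1 < 4 * k) :
    ((label k m (i + 1) : ℤ) - label k m i).natAbs = skipMultiples m (rank k i) := by
  obtain ⟨j, rfl | rfl⟩ := Nat.even_or_odd' i
  · rw [label_two_mul_add_one, label_two_mul, highLabel]; omega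
  · rw [show 2 * j + 1 + 1 = 2 * (j + 1) by ring, label_two_mul, label_two_mul_add_one,
      highLabel_eq_lowLabel_succ_add (by omega)]
    omega

theorem label_last (hk : 0 < k) (hm : m ∣ 4 * k) :
    label k m (4 * k - 1) = skipMultiples m (2 * k) := by
  rw [show 4 * k - 1 = 2 * (2 * k - 1) + 1 by omega, label_two_mul_add_one, highLabel,
    show rank k (2 * (2 * k - 1)) = 1 by unfold rank; split_ifs <;> omega, skipMultiples_one,
    lowLabel_last hk hm]

theorem diffSet_label (hk : 0 < k) (hm : m ∣ 4 * k) :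
    diffSet (SimpleGraph.cycleGraph (4 * k)) (fun v => label k m v) =
      skipMultiples m '' Set.Icc 1 (4 * k) := by
  rw [diffSet_cycleGraph (by omega)]
  ext x
  simp only [Set.mem_union, Set.mem_ofPred_eq, Set.mem_singleton_iff, Set.mem_image,
    Set.mem_Icc, label_last hk hm, label_zero, Nat.cast_zero, sub_zero, Int.natAbs_natCast]
  constructor
  · rintro (⟨i, hi, rfl⟩ | rfl)
    · rw [natAbs_label_succ_sub hi]
      exact ⟨rank k i, by unfold rank; split_ifs <;> omega, rfl⟩
    · exact ⟨2 * k, by omega, rfl⟩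
  · rintro ⟨t, ht, rfl⟩
    rcases lt_trichotomy t (2 * k) with h | rfl | h
    · refine .inl ⟨4 * k - 1 - t, by omega, ?_⟩
      rw [natAbs_label_succ_sub (by omega)]; unfold rank; split_ifs <;> congr 1 <;> omega
    · exact .inr rfl
    · refine .inl ⟨4 * k - t, by omega, ?_⟩
      rw [natAbs_label_succ_sub (by omega)]; unfold rank; split_ifs <;> congr 1 <;> omega

theorem label_injOn (hk : 0 < k) : Set.InjOn (label k m) (Set.Iio (4 * k)) := by
  intro a ha b hb h
  simp only [Set.mem_Iio] at ha hb
  obtain ⟨i, rfl | rfl⟩ := Nat.even_or_odd' a <;> obtain ⟨j, rfl | rfl⟩ := Nat.even_or_odd' b <;>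
    simp only [label_two_mul, label_two_mul_add_one] at h
  · rw [lowLabel_strictMonoOn.injOn (by simp; omega) (by simp; omega) h]
  · exact absurd h (lowLabel_lt_highLabel hk (by omega) (by omega)).ne
  · exact absurd h (lowLabel_lt_highLabel hk (by omega) (by omega)).ne'
  · rw [highLabel_strictAntiOn.injOn (by simp; omega) (by simp; omega) h]

theorem label_lt_label (hk : 0 < k) {a b : ℕ} (ha : Even a) (hb : ¬ Even b) (ha' : a < 4 * k)
    (hb' : b < 4 * k) : label k m a < label k m b := by
  simp only [label, if_pos ha, if_neg hb]
  exact lowLabel_lt_highLabel hk (by omega) (by omega)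

theorem label_le (hk : 0 < k) {i : ℕ} (hi : i < 4 * k) :
    label k m i ≤ skipMultiples m (4 * k) := by
  have hzero : highLabel k m 0 = skipMultiples m (4 * k) := by
    simp [highLabel, lowLabel, rank, hk]
  rw [← hzero]
  obtain ⟨j, rfl | rfl⟩ := Nat.even_or_odd' i
  · rw [label_two_mul]; exact (lowLabel_lt_highLabel hk (by omega) (by omega)).le
  · rw [label_two_mul_add_one]
    exact highLabel_strictAntiOn.antitoneOn (by simp) (by simp; omega) (Nat.zero_le j)

end CycleAlphaLabeling

open CycleAlphaLabeling

/-- for every positive integer `k` and every divisor `d` of `4k`,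
the cycle `C_{4k}` admits a `d`-divisible `α`-labeling (with `m = 4k/d`; the
bipartition classes are the even-indexed and odd-indexed vertices). -/
theorem stmt_8 (k d : ℕ) (hk : 0 < k) (hd : 0 < d) (hdvd : d ∣ 4 * k) :
    ∃ f : Fin (4 * k) → ℕ,
      Function.Injective f ∧
      (∀ v, f v ≤ d * (4 * k / d + 1) - 1) ∧
      diffSet (SimpleGraph.cycleGraph (4 * k)) f =
        ↑((Finset.Icc 1 (d * (4 * k / d + 1) - 1)) \
          ((Finset.Icc 1 (d - 1)).image (fun i => (4 * k / d + 1) * i))) ∧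
      ((∀ a b : Fin (4 * k), Even a.val → ¬ Even b.val → f a < f b) ∨
       (∀ a b : Fin (4 * k), ¬ Even a.val → Even b.val → f a < f b)) := by
  obtain ⟨m, hm⟩ := hdvd
  have hm0 : 0 < m := Nat.pos_of_ne_zero (by rintro rfl; omega)
  rw [hm, Nat.mul_div_cancel_left m hd, ← image_skipMultiples_Icc hm0,
    ← skipMultiples_mul hm0 hd, ← hm, coe_image, coe_Icc]
  exact ⟨fun v => label k m v, fun a b h => Fin.ext (label_injOn hk a.isLt b.isLt h),
    fun v => label_le hk v.isLt, diffSet_label hk ⟨d, by rw [hm, mul_comm]⟩,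
    .inl fun a b ha hb => label_lt_label hk ha hb a.isLt b.isLt⟩
end

section
/- In the standard α_S-labeling f of a caterpillar constructed by labeling the edges (in the natural left-to-right order) with the elements of S in ascending order and setting f(last pendant vertex) = 0, the labels of the vertices of class A taken in order are strictly decreasing, the labels of the vertices of class B taken in order are strictly increasing, and max_A f < min_B f; hence f is injective. -/
/-- The vertices of the bipartition class `A`, in their natural order:
`x_1, y_1^1,…,y_1^{m_1}, x_2, …, x_t, y_t^1,…,y_t^{m_t}`. -/
def CatAList (t : ℕ) (n m : Fin t → ℕ) : List (CatV t n m) :=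
  (List.finRange t).flatMap fun i =>
    Sum.inl (Sum.inl i) ::
      (List.finRange (m i)).map fun j => Sum.inr (Sum.inr ⟨i, j⟩)

/-- The vertices of the bipartition class `B`, in their natural order:
`x_1^1,…,x_1^{n_1}, y_1, x_2^1,…, …, y_t`. -/
def CatBList (t : ℕ) (n m : Fin t → ℕ) : List (CatV t n m) :=
  (List.finRange t).flatMap fun i =>
    ((List.finRange (n i)).map fun j => (Sum.inr (Sum.inl ⟨i, j⟩) : CatV t n m))
      ++ [Sum.inl (Sum.inr i)]

/-- The edges of the caterpillar in their natural order, each recorded as a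
pair (endpoint in `A`, endpoint in `B`):
`[x_1,x_1^1],…,[x_1,x_1^{n_1}],[x_1,y_1],[y_1,y_1^1],…,[y_1,x_2],…,[y_t,y_t^{m_t}]`. -/
def CatEList (t : ℕ) (n m : Fin t → ℕ) : List (CatV t n m × CatV t n m) :=
  (List.finRange t).flatMap fun i =>
    ((List.finRange (n i)).map fun j =>
        ((Sum.inl (Sum.inl i) : CatV t n m), Sum.inr (Sum.inl ⟨i, j⟩)))
      ++ [(Sum.inl (Sum.inl i), Sum.inl (Sum.inr i))]
      ++ ((List.finRange (m i)).map fun j =>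
        ((Sum.inr (Sum.inr ⟨i, j⟩) : CatV t n m), Sum.inl (Sum.inr i)))
      ++ (if h : (i : ℕ) + 1 < t
            then [((Sum.inl (Sum.inl ⟨(i : ℕ) + 1, h⟩) : CatV t n m),
                    Sum.inl (Sum.inr i))]
            else [])

namespace Caterpillar

open List Relation Function

section Labelling

variable {V : Type*}

def SharesEndpoint (e e' : V × V) : Prop := e.1 = e'.1 ∨ e.2 = e'.2

theorem isChain_sharesEndpoint_append {P Q : List (V × V)} {a b : V}
    (hP : ∀ e ∈ P, e.1 = a) (hQ : ∀ e ∈ Q, e.2 = b) (hPQ : ∀ e ∈ P.getLast?, e.2 = b) :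
    (P ++ Q).IsChain SharesEndpoint :=
  isChain_append.2
    ⟨(pairwise_of_forall_mem_list fun e he e' he' =>
        Or.inl ((hP e he).trans (hP e' he').symm)).isChain,
     (pairwise_of_forall_mem_list fun e he e' he' =>
        Or.inr ((hQ e he).trans (hQ e' he').symm)).isChain,
     fun e he e' he' => Or.inr ((hPQ e he).trans (hQ e' (mem_of_mem_head? he')).symm)⟩

variable {f : V → ℕ} {edges : List (V × V)} {labels : List ℕ}

theorem SharesEndpoint.reflGen_of_lt {e e' : V × V} {s s' : ℕ} (h : SharesEndpoint e e')
    (he : f e.2 = f e.1 + s) (he' : f e'.2 = f e'.1 + s') (hss' : s < s') :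
    ReflGen ((· > ·) on f) e.1 e'.1 ∧ ReflGen ((· < ·) on f) e.2 e'.2 := by
  rcases h with h | h
  · rw [← h] at he'
    exact ⟨h ▸ .refl, .single (by simp only [onFun]; omega)⟩
  · rw [← h] at he'
    exact ⟨.single (by simp only [onFun]; omega), h ▸ .refl⟩

theorem isChain_reflGen_of_forall₂ (hf : Forall₂ (fun e s => f e.2 = f e.1 + s) edges labels)
    (hlabels : labels.IsChain (· < ·)) (hadj : edges.IsChain SharesEndpoint) :
    edges.IsChain fun e e' =>
      ReflGen ((· > ·) on f) e.1 e'.1 ∧ ReflGen ((· < ·) on f) e.2 e'.2 := by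
  induction hf with
  | nil => exact .nil
  | cons he hf ih =>
    cases hf with
    | nil => exact .singleton _
    | cons he' _ =>
      obtain ⟨hss', hlabels⟩ := isChain_cons_cons.1 hlabels
      obtain ⟨hee', hadj⟩ := isChain_cons_cons.1 hadj
      exact isChain_cons_cons.2 ⟨hee'.reflGen_of_lt he he' hss', ih hlabels hadj⟩

theorem pairwise_fst_of_forall₂ (hf : Forall₂ (fun e s => f e.2 = f e.1 + s) edges labels)
    (hlabels : labels.IsChain (· < ·)) (hadj : edges.IsChain SharesEndpoint) :
    (edges.map Prod.fst).Pairwise (ReflGen ((· > ·) on f)) :=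
  ((isChain_map Prod.fst).2
    ((isChain_reflGen_of_forall₂ hf hlabels hadj).imp fun _ _ => And.left)).pairwise

theorem pairwise_snd_of_forall₂ (hf : Forall₂ (fun e s => f e.2 = f e.1 + s) edges labels)
    (hlabels : labels.IsChain (· < ·)) (hadj : edges.IsChain SharesEndpoint) :
    (edges.map Prod.snd).Pairwise (ReflGen ((· < ·) on f)) :=
  ((isChain_map Prod.snd).2
    ((isChain_reflGen_of_forall₂ hf hlabels hadj).imp fun _ _ => And.right)).pairwise

theorem le_of_reflGen_lt_on {a b : V} (h : ReflGen ((· < ·) on f) a b) : f a ≤ f b := by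
  cases h with
  | refl => rfl
  | single h => exact h.le

theorem le_of_reflGen_gt_on {a b : V} (h : ReflGen ((· > ·) on f) a b) : f b ≤ f a := by
  cases h with
  | refl => rfl
  | single h => exact h.le

-- Every `A`-label is at most the `A`-end of the first edge, every `B`-label at least its `B`-end.
theorem fst_lt_snd_of_forall₂ (hf : Forall₂ (fun e s => f e.2 = f e.1 + s) edges labels)
    (hlabels : labels.IsChain (· < ·)) (hadj : edges.IsChain SharesEndpoint)
    (hpos : ∀ s ∈ labels, 0 < s) :
    ∀ a ∈ edges.map Prod.fst, ∀ b ∈ edges.map Prod.snd, f a < f b := by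
  have hA := pairwise_fst_of_forall₂ hf hlabels hadj
  have hB := pairwise_snd_of_forall₂ hf hlabels hadj
  cases hf with
  | nil => simp
  | @cons e₀ s₀ _ _ he₀ _ =>
    intro a ha b hb
    have ha₀ : f a ≤ f e₀.1 :=
      le_of_reflGen_gt_on (forall_mem_cons.2 ⟨.refl, (pairwise_cons.1 hA).1⟩ a ha)
    have hb₀ : f e₀.2 ≤ f b :=
      le_of_reflGen_lt_on (forall_mem_cons.2 ⟨.refl, (pairwise_cons.1 hB).1⟩ b hb)
    have := hpos s₀ mem_cons_self
    omega

end Labelling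

theorem _root_.List.Pairwise.of_reflGen {α : Type*} {r : α → α → Prop} {l : List α}
    (h : l.Pairwise (ReflGen r)) (hl : l.Nodup) : l.Pairwise r :=
  (h.and hl).imp fun ⟨hab, hne⟩ => ((reflGen_iff _ _ _).1 hab).resolve_left hne.symm

theorem injective_of_pairwise {V : Type*} {f : V → ℕ} {A B : List V}
    (hcover : ∀ v, v ∈ A ∨ v ∈ B) (hA : A.Pairwise fun a b => f b < f a)
    (hB : B.Pairwise fun a b => f a < f b) (hAB : ∀ a ∈ A, ∀ b ∈ B, f a < f b) :
    Injective f := by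
  have hinc : (A.reverse ++ B).Pairwise fun a b => f a < f b :=
    pairwise_append.2
      ⟨pairwise_reverse.2 hA, hB, fun a ha b hb => hAB a (mem_reverse.1 ha) b hb⟩
  have hnodup : ((A.reverse ++ B).map f).Nodup := pairwise_map.2 (hinc.imp ne_of_lt)
  intro v w hvw
  have mem : ∀ u, u ∈ A.reverse ++ B := fun u => by
    simpa only [mem_append, mem_reverse] using hcover u
  exact inj_on_of_nodup_map hnodup (mem v) (mem w) hvw

variable {t : ℕ} {n m : Fin t → ℕ}

theorem mem_catAList_or_mem_catBList (v : CatV t n m) :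
    v ∈ CatAList t n m ∨ v ∈ CatBList t n m := by
  rcases v with (i | i) | (⟨i, j⟩ | ⟨i, j⟩) <;> simp [CatAList, CatBList]

theorem catAList_nodup : (CatAList t n m).Nodup := by
  refine nodup_flatMap.2
    ⟨fun i _ => ?_, (nodup_finRange t).pairwise_of_forall_ne fun i _ j _ hij => ?_⟩
  · exact nodup_cons.2 ⟨by simp, (nodup_finRange _).map fun j j' h => by simpa using h⟩
  · simp [onFun, disjoint_left, hij, hij.symm]

theorem catBList_nodup : (CatBList t n m).Nodup := by
  refine nodup_flatMap.2
    ⟨fun i _ => ?_, (nodup_finRange t).pairwise_of_forall_ne fun i _ j _ hij => ?_⟩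
  · exact nodup_append.2
      ⟨(nodup_finRange _).map fun j j' h => by simpa using h, by simp, by simp⟩
  · simp [onFun, disjoint_left, hij, hij.symm]

theorem catAList_sublist : CatAList t n m <+ (CatEList t n m).map Prod.fst := by
  rw [CatAList, CatEList, map_flatMap]
  refine Sublist.flatMap_right _ fun i _ => ?_
  simp only [map_append, List.map_map, map_cons, append_assoc, cons_append, nil_append]
  exact sublist_append_of_sublist_right ((sublist_append_left _ _).cons_cons _)

theorem catBList_sublist : CatBList t n m <+ (CatEList t n m).map Prod.snd := by
  rw [CatBList, CatEList, map_flatMap]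
  refine Sublist.flatMap_right _ fun i _ => ?_
  simp only [map_append, List.map_map, map_cons, append_assoc, cons_append, nil_append]
  exact ((nil_sublist _).cons_cons _).append_left _

-- The star at `x_i` followed by the star at `y_i`.
def catEBlock (t : ℕ) (n m : Fin t → ℕ) (i : Fin t) : List (CatV t n m × CatV t n m) :=
  ((List.finRange (n i)).map fun j =>
      ((Sum.inl (Sum.inl i) : CatV t n m), Sum.inr (Sum.inl ⟨i, j⟩)))
    ++ [(Sum.inl (Sum.inl i), Sum.inl (Sum.inr i))]
    ++ ((List.finRange (m i)).map fun j =>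
      ((Sum.inr (Sum.inr ⟨i, j⟩) : CatV t n m), Sum.inl (Sum.inr i)))
    ++ (if h : (i : ℕ) + 1 < t
          then [((Sum.inl (Sum.inl ⟨(i : ℕ) + 1, h⟩) : CatV t n m), Sum.inl (Sum.inr i))]
          else [])

theorem catEList_eq_flatMap : CatEList t n m = (finRange t).flatMap (catEBlock t n m) := rfl

theorem fst_of_mem_xStar (i : Fin t) :
    ∀ e ∈ ((finRange (n i)).map fun j =>
        ((Sum.inl (Sum.inl i), Sum.inr (Sum.inl ⟨i, j⟩)) : CatV t n m × CatV t n m))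
      ++ [(Sum.inl (Sum.inl i), Sum.inl (Sum.inr i))], e.1 = Sum.inl (Sum.inl i) := by
  rintro e he
  simp only [mem_append, mem_map, mem_singleton] at he
  rcases he with ⟨j, -, rfl⟩ | rfl <;> rfl

theorem fst_of_mem_head?_catEBlock (i : Fin t) :
    ∀ e ∈ (catEBlock t n m i).head?, e.1 = Sum.inl (Sum.inl i) := by
  rw [catEBlock, head?_append_of_ne_nil _ (by simp), head?_append_of_ne_nil _ (by simp)]
  exact fun e he => fst_of_mem_xStar i e (mem_of_mem_head? he)

theorem getLast?_catEBlock {k : ℕ} (hk : k + 1 < t) :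
    (catEBlock t n m ⟨k, by omega⟩).getLast? =
      some (Sum.inl (Sum.inl ⟨k + 1, hk⟩), Sum.inl (Sum.inr ⟨k, by omega⟩)) := by
  rw [catEBlock, dif_pos hk, getLast?_concat]

theorem isChain_catEBlock (i : Fin t) : (catEBlock t n m i).IsChain SharesEndpoint := by
  rw [catEBlock, append_assoc]
  refine isChain_sharesEndpoint_append (a := Sum.inl (Sum.inl i)) (b := Sum.inl (Sum.inr i))
    (fst_of_mem_xStar i) ?_ (by simp)
  split <;> simp

theorem catEList_isChain : (CatEList t n m).IsChain SharesEndpoint := by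
  rw [catEList_eq_flatMap, flatMap_def, isChain_flatten (by simp [catEBlock]), isChain_map,
    isChain_iff_getElem]
  refine ⟨fun l hl => ?_, fun k hk => ?_⟩
  · obtain ⟨i, -, rfl⟩ := mem_map.1 hl
    exact isChain_catEBlock i
  · simp only [length_finRange] at hk
    simp only [getElem_finRange, Fin.cast_mk, getLast?_catEBlock hk]
    rintro e he e' he'
    obtain rfl := Option.mem_some_iff.1 he
    exact Or.inl (fst_of_mem_head?_catEBlock _ e' he').symm

end Caterpillar

theorem stmt_17_general (t : ℕ) (n m : Fin t → ℕ) (S : Finset ℕ)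
    (hpos : ∀ s ∈ S, 0 < s) (f : CatV t n m → ℕ)
    (hf : List.Forall₂ (fun (pr : CatV t n m × CatV t n m) (s : ℕ) =>
        f pr.2 = f pr.1 + s)
      (CatEList t n m) (S.sort (· ≤ ·))) :
    List.Chain' (fun a b => f b < f a) (CatAList t n m) ∧
    List.Chain' (fun a b => f a < f b) (CatBList t n m) ∧
    (∀ a ∈ CatAList t n m, ∀ b ∈ CatBList t n m, f a < f b) ∧
    Function.Injective f := by
  have hlabels : (S.sort (· ≤ ·)).IsChain (· < ·) := (Finset.sortedLT_sort S).isChain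
  have hadj : (CatEList t n m).IsChain Caterpillar.SharesEndpoint := Caterpillar.catEList_isChain
  have hA : (CatAList t n m).Pairwise fun a b => f b < f a :=
    ((Caterpillar.pairwise_fst_of_forall₂ hf hlabels hadj).sublist
      Caterpillar.catAList_sublist).of_reflGen Caterpillar.catAList_nodup
  have hB : (CatBList t n m).Pairwise fun a b => f a < f b :=
    ((Caterpillar.pairwise_snd_of_forall₂ hf hlabels hadj).sublist
      Caterpillar.catBList_sublist).of_reflGen Caterpillar.catBList_nodup
  have hAB : ∀ a ∈ CatAList t n m, ∀ b ∈ CatBList t n m, f a < f b := fun a ha b hb =>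
    Caterpillar.fst_lt_snd_of_forall₂ hf hlabels hadj
      (fun s hs => hpos s ((Finset.mem_sort _).1 hs))
      a (Caterpillar.catAList_sublist.subset ha) b (Caterpillar.catBList_sublist.subset hb)
  exact ⟨hA.isChain, hB.isChain, hAB,
    Caterpillar.injective_of_pairwise Caterpillar.mem_catAList_or_mem_catBList hA hB hAB⟩

/-- for the standard `α_S`-labeling `f` of a caterpillar —
the edges, taken in their natural order, get as labels `f(B-end) - f(A-end)`
the elements of `S` in ascending order, and the last vertex of class `A` gets
label `0` — the labels of the vertices of `A`, taken in order, are strictly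
decreasing, those of `B` are strictly increasing, every label on `A` is
smaller than every label on `B`, and `f` is injective. -/
theorem stmt_17 (t : ℕ) (ht : 0 < t) (n m : Fin t → ℕ) (S : Finset ℕ)
    (hpos : ∀ s ∈ S, 0 < s) (f : CatV t n m → ℕ)
    (hf : List.Forall₂ (fun (pr : CatV t n m × CatV t n m) (s : ℕ) =>
        f pr.2 = f pr.1 + s)
      (CatEList t n m) (S.sort (· ≤ ·)))
    (hlast : ∀ v, (CatAList t n m).getLast? = some v → f v = 0) :
    List.Chain' (fun a b => f b < f a) (CatAList t n m) ∧
    List.Chain' (fun a b => f a < f b) (CatBList t n m) ∧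
    (∀ a ∈ CatAList t n m, ∀ b ∈ CatBList t n m, f a < f b) ∧
    Function.Injective f :=
  stmt_17_general t n m S hpos f hf
end
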